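/- arXiv:2209.03747 — 4 statements merged into one kernel-verified Lean document; each statement's English description precedes it below -/
import Mathlib

section
/- Let (X,d) and (Y,d') be geodesic δ-hyperbolic spaces and let φ: X → Y be a (λ,μ)-quasi-isometry. If Y is boundary rigid, then X is boundary rigid. (Hence boundary rigidity of geodesic Gromov hyperbolic spaces is a quasi-isometry invariant.) -/
open Metric Filter Set

namespace BoundaryRigidity

universe u

variable {X : Type*} {Y : Type*}

/-- The Gromov product of `x` and `y` with respect to the base point `w`. -/
noncomputable def gp [MetricSpace X] (w x y : X) : ℝ :=
  (dist x w + dist y w - dist x y) / 2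

/-- A Gromov sequence: `(x_i | x_j)_w → ∞` as `i, j → ∞` (for every base point,
the condition being base-point independent). -/
def IsGromovSeq [MetricSpace X] (u : ℕ → X) : Prop :=
  ∀ w : X, Tendsto (fun p : ℕ × ℕ => gp w (u p.1) (u p.2)) atTop atTop

/-- Two Gromov sequences are equivalent if `(x_i | y_i)_w → ∞`. -/
def GromovEquiv [MetricSpace X] (u v : ℕ → X) : Prop :=
  IsGromovSeq u ∧ IsGromovSeq v ∧
    ∀ w : X, Tendsto (fun i => gp w (u i) (v i)) atTop atTop

/-- `γ` is a geodesic (unit-speed) parametrization on the interval `[a, b]`. -/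
def IsGeodSegment [MetricSpace X] (γ : ℝ → X) (a b : ℝ) : Prop :=
  ∀ s ∈ Icc a b, ∀ t ∈ Icc a b, dist (γ s) (γ t) = |s - t|

/-- A geodesic metric space: any two points are joined by a geodesic. -/
def GeodesicSpace (X : Type*) [MetricSpace X] : Prop :=
  ∀ x y : X, ∃ γ : ℝ → X, IsGeodSegment γ 0 (dist x y) ∧ γ 0 = x ∧ γ (dist x y) = y

/-- δ-hyperbolicity (Rips condition): every point on an edge of a geodesic triangle is
within `δ` of the union of the other two edges. -/
def DeltaHyp (X : Type*) [MetricSpace X] (δ : ℝ) : Prop :=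
  ∀ (γ₁ γ₂ γ₃ : ℝ → X) (a₁ b₁ a₂ b₂ a₃ b₃ : ℝ),
    IsGeodSegment γ₁ a₁ b₁ → IsGeodSegment γ₂ a₂ b₂ → IsGeodSegment γ₃ a₃ b₃ →
    a₁ ≤ b₁ → a₂ ≤ b₂ → a₃ ≤ b₃ →
    γ₁ a₁ = γ₃ a₃ → γ₁ b₁ = γ₂ a₂ → γ₂ b₂ = γ₃ b₃ →
    ∀ s ∈ Icc a₁ b₁, ∃ p : X,
      ((∃ t ∈ Icc a₂ b₂, p = γ₂ t) ∨ (∃ t ∈ Icc a₃ b₃, p = γ₃ t)) ∧ dist (γ₁ s) p ≤ δ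

/-- A point of `X̄ = X ∪ ∂X`: an interior point, or a boundary point represented
by a Gromov sequence. -/
def IsXBarPt [MetricSpace X] : X ⊕ (ℕ → X) → Prop
  | Sum.inl _ => True
  | Sum.inr u => IsGromovSeq u

/-- The left end of the curve `γ` (restricted to `I`) is the point `p` of `X̄`:
either `γ` attains the interior point at the minimum of `I`, or `I` is unbounded
below and `γ` converges at `-∞` to the given boundary point. -/
def LeftEnd [MetricSpace X] (γ : ℝ → X) (I : Set ℝ) : X ⊕ (ℕ → X) → Prop
  | Sum.inl a => ∃ s ∈ I, γ s = a ∧ ∀ t ∈ I, s ≤ t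
  | Sum.inr u => ∃ σ : ℕ → ℝ, (∀ n, σ n ∈ I) ∧ Tendsto σ atTop atBot ∧
      GromovEquiv (fun n => γ (σ n)) u

/-- The right end of the curve `γ` (restricted to `I`) is the point `p` of `X̄`. -/
def RightEnd [MetricSpace X] (γ : ℝ → X) (I : Set ℝ) : X ⊕ (ℕ → X) → Prop
  | Sum.inl a => ∃ s ∈ I, γ s = a ∧ ∀ t ∈ I, t ≤ s
  | Sum.inr u => ∃ σ : ℕ → ℝ, (∀ n, σ n ∈ I) ∧ Tendsto σ atTop atTop ∧
      GromovEquiv (fun n => γ (σ n)) u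

/-- `γ` restricted to the interval `I` is a geodesic joining `p` to `q` in `X̄`. -/
def IsGeodJoining [MetricSpace X] (γ : ℝ → X) (I : Set ℝ) (p q : X ⊕ (ℕ → X)) : Prop :=
  I.Nonempty ∧ I.OrdConnected ∧ (∀ s ∈ I, ∀ t ∈ I, dist (γ s) (γ t) = |s - t|) ∧
    LeftEnd γ I p ∧ RightEnd γ I q

/-- `γ` restricted to the interval `I` is a `(K, C)`-quasi-geodesic joining `p` to `q`. -/
def IsQGeodJoining [MetricSpace X] (K C : ℝ) (γ : ℝ → X) (I : Set ℝ)
    (p q : X ⊕ (ℕ → X)) : Prop :=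
  I.Nonempty ∧ I.OrdConnected ∧
    (∀ s ∈ I, ∀ t ∈ I, K⁻¹ * |s - t| - C ≤ dist (γ s) (γ t) ∧
      dist (γ s) (γ t) ≤ K * |s - t| + C) ∧
    LeftEnd γ I p ∧ RightEnd γ I q

/-- `x` is a `(K, C, ρ)`-quasi-centroid of the triple `p₁, p₂, p₃ ∈ X̄`. -/
def IsQuasiCentroid [MetricSpace X] (K C ρ : ℝ) (x : X) (p₁ p₂ p₃ : X ⊕ (ℕ → X)) : Prop :=
  ∃ (γ₁ γ₂ γ₃ : ℝ → X) (I₁ I₂ I₃ : Set ℝ),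
    IsQGeodJoining K C γ₁ I₁ p₁ p₂ ∧ IsQGeodJoining K C γ₂ I₂ p₂ p₃ ∧
      IsQGeodJoining K C γ₃ I₃ p₁ p₃ ∧
      (∃ s ∈ I₁, dist x (γ₁ s) ≤ ρ) ∧ (∃ s ∈ I₂, dist x (γ₂ s) ≤ ρ) ∧
      (∃ s ∈ I₃, dist x (γ₃ s) ≤ ρ)

/-- `Δ_{(K,C,ρ)}(∂X)`: all `(K,C,ρ)`-quasi-centroids of triples of boundary points. -/
def centroidSetBdry (X : Type*) [MetricSpace X] (K C ρ : ℝ) : Set X :=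
  {x | ∃ u₁ u₂ u₃ : ℕ → X, IsGromovSeq u₁ ∧ IsGromovSeq u₂ ∧ IsGromovSeq u₃ ∧
    IsQuasiCentroid K C ρ x (Sum.inr u₁) (Sum.inr u₂) (Sum.inr u₃)}

/-- `E` is `M`-roughly full in `X`. -/
def RoughlyFull [MetricSpace X] (E : Set X) (M : ℝ) : Prop :=
  ∀ x : X, ∃ e ∈ E, dist x e ≤ M

/-- `(K, C)`-quasi-isometric embedding. -/
def IsQIEmbedding [MetricSpace X] [MetricSpace Y] (K C : ℝ) (f : X → Y) : Prop :=
  1 ≤ K ∧ 0 ≤ C ∧ ∀ x y : X,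
    K⁻¹ * dist x y - C ≤ dist (f x) (f y) ∧ dist (f x) (f y) ≤ K * dist x y + C

/-- `(K, C)`-quasi-isometry. -/
def IsQuasiIsometry [MetricSpace X] [MetricSpace Y] (K C : ℝ) (f : X → Y) : Prop :=
  IsQIEmbedding K C f ∧ ∀ y : Y, ∃ x : X, dist y (f x) ≤ C

/-- `X` is boundary rigid: every self quasi-isometry inducing the identity map on the
Gromov boundary (i.e. sending every Gromov sequence to an equivalent one) has finite
displacement. -/
def BoundaryRigid (X : Type*) [MetricSpace X] : Prop :=
  ∀ (K C : ℝ) (f : X → X), IsQuasiIsometry K C f →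
    (∀ u : ℕ → X, IsGromovSeq u → GromovEquiv u (f ∘ u)) →
    ∃ M : ℝ, ∀ x : X, dist x (f x) ≤ M

/-- `o ∈ X̄` is an `L`-pole: every point of `X` lies within `L` of some geodesic
from `o` to some boundary point. -/
def PoleAt [MetricSpace X] (L : ℝ) (o : X ⊕ (ℕ → X)) : Prop :=
  IsXBarPt o ∧ ∀ x : X, ∃ (γ : ℝ → X) (I : Set ℝ) (v : ℕ → X), IsGromovSeq v ∧
    IsGeodJoining γ I o (Sum.inr v) ∧ ∃ s ∈ I, dist x (γ s) ≤ L

/-- `X` has a pole. -/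
def HasPole (X : Type*) [MetricSpace X] : Prop :=
  ∃ (L : ℝ) (o : X ⊕ (ℕ → X)), 0 ≤ L ∧ PoleAt L o

/-- `ρ_{w,ε}` on boundary classes: `e^{-ε (ξ|ζ)_w}` where the Gromov product of two
boundary points is the infimum over representatives of the liminf of Gromov products;
equivalently the sup over representatives of the limsup of `e^{-ε (x_i|y_i)_w}`. -/
noncomputable def visRho [MetricSpace X] (w : X) (ε : ℝ) (u v : ℕ → X) : ℝ :=
  sSup {t | ∃ u' v' : ℕ → X, GromovEquiv u u' ∧ GromovEquiv v v' ∧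
    t = Filter.limsup (fun i => Real.exp (-ε * gp w (u' i) (v' i))) atTop}

/-- The visual metric `d_{w,ε}` on boundary classes, as a chain infimum of `ρ_{w,ε}`. -/
noncomputable def visDist [MetricSpace X] (w : X) (ε : ℝ) (u v : ℕ → X) : ℝ :=
  sInf {s | ∃ (n : ℕ) (c : ℕ → ℕ → X), 1 ≤ n ∧ (∀ i, i ≤ n → IsGromovSeq (c i)) ∧
    GromovEquiv (c 0) u ∧ GromovEquiv (c n) v ∧
    s = ∑ i ∈ Finset.range n, visRho w ε (c i) (c (i + 1))}

/-- The Gromov boundary of `X` (with any visual metric whose parameters are admissible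
for `δ`) is uniformly perfect. -/
def BoundaryUniformlyPerfect (X : Type*) [MetricSpace X] (δ : ℝ) : Prop :=
  ∀ (w : X) (ε : ℝ), 0 < ε → ε < 1 → ε * (5 * δ) < 1 →
    ∃ S : ℝ, 1 ≤ S ∧ ∃ r₀ : ℝ, 0 < r₀ ∧
      ∀ u : ℕ → X, IsGromovSeq u → ∀ r : ℝ, 0 < r → r ≤ r₀ →
        ∃ v : ℕ → X, IsGromovSeq v ∧ r / S < visDist w ε u v ∧ visDist w ε u v ≤ r

/-- Bi-infinite geodesic. -/
def IsBiInfGeod [MetricSpace X] (γ : ℝ → X) : Prop :=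
  ∀ s t : ℝ, dist (γ s) (γ t) = |s - t|

/-- Distance between (the images of) two bi-infinite geodesics. -/
noncomputable def lineDist [MetricSpace X] (γ γ' : ℝ → X) : ℝ :=
  sInf {r | ∃ s t : ℝ, r = dist (γ s) (γ' t)}

/-- First condition in the definition of geodesic richness. -/
def RichCondOne (X : Type*) [MetricSpace X] (r₀ r₁ r₂ : ℝ) : Prop :=
  ∀ p q : X, r₀ ≤ dist p q → ∃ γ : ℝ → X, IsBiInfGeod γ ∧
    infDist p (range γ) < r₁ ∧ |infDist q (range γ) - dist p q| < r₂

/-- Second condition in the definition of geodesic richness. -/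
def RichCondTwo (X : Type*) [MetricSpace X] (r₃ r₄ : ℝ) : Prop :=
  ∀ γ : ℝ → X, IsBiInfGeod γ → ∀ p : X, ∃ γ' : ℝ → X, IsBiInfGeod γ' ∧
    infDist p (range γ') < r₃ ∧ |infDist p (range γ) - lineDist γ' γ| < r₄

/-- Geodesically rich space. -/
def GeodesicallyRich (X : Type*) [MetricSpace X] : Prop :=
  ∃ r₀ r₁ r₂ r₃ r₄ : ℝ, RichCondOne X r₀ r₁ r₂ ∧ RichCondTwo X r₃ r₄

/-- Every closest-point projection of `x` to the geodesic segment `γ|_{[a,b]}`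
lies within `R` of the point `c`. -/
def segProjIn [MetricSpace X] (γ : ℝ → X) (a b : ℝ) (x c : X) (R : ℝ) : Prop :=
  ∀ s ∈ Icc a b, (∀ t ∈ Icc a b, dist x (γ s) ≤ dist x (γ t)) → dist (γ s) c ≤ R

/-- Projection to a geodesic `[y,z]` (parametrized by `γ` on `I`): the set of closest
points for interior `x`, and the set of `(1,0,3δ)`-quasi-centroids of `{x,y,z}` for
boundary `x`. -/
def projSet [MetricSpace X] (δ : ℝ) (γ : ℝ → X) (I : Set ℝ) (y z : X ⊕ (ℕ → X)) :
    X ⊕ (ℕ → X) → Set X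
  | Sum.inl a => {p | ∃ s ∈ I, p = γ s ∧ ∀ t ∈ I, dist a (γ s) ≤ dist a (γ t)}
  | Sum.inr u => {p | IsQuasiCentroid 1 0 (3 * δ) p (Sum.inr u) y z}

/-!
Conjugating a self-quasi-isometry `f` of `X` by `φ` and a quasi-inverse `ψ` gives the
self-quasi-isometry `φ ∘ f ∘ ψ` of `Y`, whose bounded displacement pulls back to `f`. It acts
trivially on `∂Y` because a `(K, C)`-quasi-isometric embedding `h` of a geodesic space into a
geodesic `δ`-hyperbolic space satisfies `(h x | h y)_{h w} ≥ (x | y)_w / (2K) - b`.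

For the latter, let `m = (x | y)_w`. A geodesic piece of length at most `6m` staying at distance
`≥ m` from `w` is cut into `≈ 12K²` short pieces, each of whose images has Gromov product
`≥ m / (2K) - 2C` seen from `h w`; the four point condition glues them with a bounded loss.
A geodesic `[x, y]` splits into such a middle piece, centred at the point at distance `(y | w)_x`
from `x`, and two outer pieces whose endpoints have Gromov product at least `4m`. By induction on
`r` with `d(x, y) ≤ r (x | y)_w`, the outer pieces already satisfy the bound, and the gain from
`m` to `4m` absorbs the loss of gluing the three pieces once `m ≥ 12δK`.
-/

section GromovProduct

variable [MetricSpace X]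

lemma gp_comm (w x y : X) : gp w x y = gp w y x := by
  simp only [gp, dist_comm x y]; ring

lemma gp_nonneg (w x y : X) : 0 ≤ gp w x y := by
  have := dist_triangle x w y
  rw [dist_comm w y] at this
  unfold gp; linarith

lemma gp_self (w x : X) : gp w x x = dist x w := by simp [gp]

lemma gp_le_dist_left (w x y : X) : gp w x y ≤ dist x w := by
  have := dist_triangle y x w
  rw [dist_comm y x] at this
  unfold gp; linarith

lemma dist_sub_dist_le_gp (w x y : X) : dist x w - dist x y ≤ gp w x y := by
  have := dist_triangle x y w
  unfold gp; linarith

lemma gp_add_gp (w x y : X) : gp x y w + gp w x y = dist x w := by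
  simp only [gp, dist_comm y x, dist_comm w x]; ring

lemma gp_add_gp_swap (w x y : X) : gp x y w + gp y x w = dist x y := by
  simp only [gp, dist_comm y x, dist_comm w x, dist_comm w y]; ring

lemma gp_le_gp_add_dist_left (w x x' y : X) : gp w x y ≤ gp w x' y + dist x x' := by
  have h₁ := dist_triangle x x' w
  have h₂ := dist_triangle x' x y
  rw [dist_comm x' x] at h₂
  unfold gp; linarith

lemma gp_le_gp_add_dist_right (w x y y' : X) : gp w x y ≤ gp w x y' + dist y y' := by
  rw [gp_comm w x y, gp_comm w x y']; exact gp_le_gp_add_dist_left w y y' x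

lemma gp_le_gp_add_dist_base (w w' x y : X) : gp w x y ≤ gp w' x y + dist w w' := by
  have h₁ := dist_triangle x w' w
  have h₂ := dist_triangle y w' w
  rw [dist_comm w' w] at h₁ h₂
  unfold gp; linarith

lemma dist_le_of_dist_add_dist_eq {a p w : X} (h : dist a p + dist p w = dist a w) (z : X) :
    dist w z ≤ dist a w - dist a z + 2 * dist z p := by
  have h₁ := dist_triangle w p z
  have h₂ := dist_triangle a p z
  rw [dist_comm w p, dist_comm p z] at *
  linarith

end GromovProduct

section GeodSegment

variable [MetricSpace X] {γ : ℝ → X} {a b s t : ℝ}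

lemma IsGeodSegment.dist_eq (hγ : IsGeodSegment γ a b) (hs : s ∈ Icc a b) (ht : t ∈ Icc a b)
    (hst : s ≤ t) : dist (γ s) (γ t) = t - s := by
  rw [hγ s hs t ht, abs_of_nonpos (by linarith), neg_sub]

lemma IsGeodSegment.mono {a' b' : ℝ} (hγ : IsGeodSegment γ a b) (ha : a ≤ a') (hb : b' ≤ b) :
    IsGeodSegment γ a' b' := fun s hs t ht =>
  hγ s (Icc_subset_Icc ha hb hs) t (Icc_subset_Icc ha hb ht)

lemma IsGeodSegment.dist_add_dist (hγ : IsGeodSegment γ a b) (hs : s ∈ Icc a b) :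
    dist (γ a) (γ s) + dist (γ s) (γ b) = dist (γ a) (γ b) := by
  have hab := hs.1.trans hs.2
  rw [hγ.dist_eq (left_mem_Icc.2 hab) hs hs.1, hγ.dist_eq hs (right_mem_Icc.2 hab) hs.2,
    hγ.dist_eq (left_mem_Icc.2 hab) (right_mem_Icc.2 hab) hab]
  ring

lemma IsGeodSegment.gp_le_dist (hγ : IsGeodSegment γ a b) (hs : s ∈ Icc a b) (w : X) :
    gp w (γ a) (γ b) ≤ dist w (γ s) := by
  have := hγ.dist_add_dist hs
  have h₁ := dist_triangle (γ a) (γ s) w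
  have h₂ := dist_triangle (γ b) (γ s) w
  rw [dist_comm (γ b) (γ s), dist_comm (γ s) w] at *
  unfold gp; linarith

end GeodSegment

section Hyperbolic

variable [MetricSpace X] {δ : ℝ}

lemma DeltaHyp.exists_dist_le_gp_add (hg : GeodesicSpace X) (hh : DeltaHyp X δ) {γ : ℝ → X}
    {L : ℝ} (hγ : IsGeodSegment γ 0 L) (hL : 0 ≤ L) (w : X) :
    ∃ s ∈ Icc 0 L, dist w (γ s) ≤ gp w (γ 0) (γ L) + 2 * δ := by
  have hpq : dist (γ 0) (γ L) = L := by
    rw [hγ.dist_eq (left_mem_Icc.2 hL) (right_mem_Icc.2 hL) hL, sub_zero]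
  obtain ⟨α, hα, hα₀, hα₁⟩ := hg (γ 0) w
  obtain ⟨β, hβ, hβ₀, hβ₁⟩ := hg (γ L) w
  set t₀ := gp (γ 0) (γ L) w
  have ht₀ : t₀ ∈ Icc 0 L := by
    refine ⟨gp_nonneg _ _ _, ?_⟩
    have := gp_le_dist_left (γ 0) (γ L) w
    rwa [dist_comm, hpq] at this
  have h₀ : dist (γ 0) (γ t₀) = t₀ := by
    rw [hγ.dist_eq (left_mem_Icc.2 hL) ht₀ ht₀.1, sub_zero]
  have h₁ : dist (γ L) (γ t₀) = L - t₀ := by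
    rw [dist_comm, hγ.dist_eq ht₀ (right_mem_Icc.2 hL) ht₀.2]
  obtain ⟨P, hP, hPd⟩ := hh γ β α 0 L 0 _ 0 _ hγ hβ hα hL dist_nonneg dist_nonneg
    hα₀.symm hβ₀.symm (hβ₁.trans hα₁.symm) t₀ ht₀
  refine ⟨t₀, ht₀, ?_⟩
  rcases hP with ⟨t, ht, rfl⟩ | ⟨t, ht, rfl⟩
  · have := dist_le_of_dist_add_dist_eq (hβ₀ ▸ hβ₁ ▸ hβ.dist_add_dist ht) (γ t₀)
    have := gp_add_gp w (γ L) (γ 0)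
    have := gp_add_gp_swap w (γ 0) (γ L)
    rw [gp_comm w (γ L)] at *
    linarith
  · have := dist_le_of_dist_add_dist_eq (hα₀ ▸ hα₁ ▸ hα.dist_add_dist ht) (γ t₀)
    have := gp_add_gp w (γ 0) (γ L)
    linarith

lemma DeltaHyp.min_gp_sub_le (hg : GeodesicSpace X) (hh : DeltaHyp X δ) (w x y z : X) :
    min (gp w x y) (gp w y z) - 3 * δ ≤ gp w x z := by
  obtain ⟨γ₁, hγ₁, h₁₀, h₁₁⟩ := hg x z
  obtain ⟨γ₂, hγ₂, h₂₀, h₂₁⟩ := hg z y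
  obtain ⟨γ₃, hγ₃, h₃₀, h₃₁⟩ := hg x y
  obtain ⟨s, hs, hsw⟩ := hh.exists_dist_le_gp_add hg hγ₁ dist_nonneg w
  rw [h₁₀, h₁₁] at hsw
  obtain ⟨P, hP, hPd⟩ := hh γ₁ γ₂ γ₃ 0 _ 0 _ 0 _ hγ₁ hγ₂ hγ₃ dist_nonneg dist_nonneg
    dist_nonneg (h₁₀.trans h₃₀.symm) (h₁₁.trans h₂₀.symm) (h₂₁.trans h₃₁.symm) s hs
  have hwP := dist_triangle w (γ₁ s) P
  rcases hP with ⟨t, ht, rfl⟩ | ⟨t, ht, rfl⟩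
  · have := hγ₂.gp_le_dist ht w
    rw [h₂₀, h₂₁, gp_comm] at this
    linarith [min_le_right (gp w x y) (gp w y z)]
  · have := hγ₃.gp_le_dist ht w
    rw [h₃₀, h₃₁] at this
    linarith [min_le_left (gp w x y) (gp w y z)]

lemma DeltaHyp.sub_le_gp_of_chain (hδ : 0 ≤ δ) (hg : GeodesicSpace X) (hh : DeltaHyp X δ)
    {c : ℕ → X} {w : X} {T : ℝ} :
    ∀ N : ℕ, (∀ i ≤ N, T ≤ gp w (c i) (c (i + 1))) → T - 3 * δ * N ≤ gp w (c 0) (c (N + 1))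
  | 0, hc => by simpa using hc 0 le_rfl
  | N + 1, hc => by
    have ih := hh.sub_le_gp_of_chain hδ hg N fun i hi => hc i (by omega)
    have hlast := hc (N + 1) le_rfl
    have := hh.min_gp_sub_le hg w (c 0) (c (N + 1)) (c (N + 2))
    have : T - 3 * δ * N ≤ min (gp w (c 0) (c (N + 1))) (gp w (c (N + 1)) (c (N + 2))) :=
      le_min ih (by nlinarith [N.cast_nonneg (α := ℝ)])
    push_cast
    linarith

end Hyperbolic

section QuasiIsometry

variable [MetricSpace X] [MetricSpace Y] {K C : ℝ} {h : X → Y}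

lemma IsQIEmbedding.pos (hh : IsQIEmbedding K C h) : 0 < K := one_pos.trans_le hh.1

lemma IsQIEmbedding.le_dist_map (hh : IsQIEmbedding K C h) (x y : X) :
    K⁻¹ * dist x y - C ≤ dist (h x) (h y) := (hh.2.2 x y).1

lemma IsQIEmbedding.dist_map_le_of_le (hh : IsQIEmbedding K C h) {x y : X} {r : ℝ}
    (hxy : dist x y ≤ r) : dist (h x) (h y) ≤ K * r + C :=
  (hh.2.2 x y).2.trans (by gcongr; exact hh.1.trans' zero_le_one)

lemma IsQIEmbedding.dist_le_of_dist_map_le (hh : IsQIEmbedding K C h) {x y : X} {r : ℝ}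
    (hxy : dist (h x) (h y) ≤ r) : dist x y ≤ K * (r + C) := by
  exact (inv_mul_le_iff₀ hh.pos).1 (by linarith [hh.le_dist_map x y])

lemma IsQIEmbedding.weaken {C' : ℝ} (hh : IsQIEmbedding K C h) (hC : C ≤ C') :
    IsQIEmbedding K C' h :=
  ⟨hh.1, hh.2.1.trans hC, fun x y =>
    ⟨by linarith [hh.le_dist_map x y], by linarith [(hh.2.2 x y).2]⟩⟩

lemma IsQIEmbedding.comp {Z : Type*} [MetricSpace Z] {K' C' : ℝ} {g : Y → Z}
    (hg : IsQIEmbedding K' C' g) (hh : IsQIEmbedding K C h) :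
    IsQIEmbedding (K * K') (K' * C + C') (g ∘ h) := by
  have hK := hh.pos
  have hK' := hg.pos
  refine ⟨one_le_mul_of_one_le_of_one_le hh.1 hg.1, by nlinarith [hh.2.1, hg.2.1], fun x y => ?_⟩
  refine ⟨?_, (hg.dist_map_le_of_le (hh.dist_map_le_of_le le_rfl)).trans_eq (by ring)⟩
  have hlow := hg.le_dist_map (h x) (h y)
  have h₁ : K'⁻¹ * (K⁻¹ * dist x y - C) ≤ K'⁻¹ * dist (h x) (h y) := by
    gcongr; exact hh.le_dist_map x y
  have h₂ : K'⁻¹ * C ≤ K' * C := by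
    gcongr
    · exact hh.2.1
    · exact (inv_le_one_of_one_le₀ hg.1).trans hg.1
  rw [Function.comp_apply, Function.comp_apply, mul_inv, mul_comm K⁻¹]
  nlinarith

lemma IsQuasiIsometry.comp {Z : Type*} [MetricSpace Z] {K' C' : ℝ} {g : Y → Z}
    (hg : IsQuasiIsometry K' C' g) (hh : IsQuasiIsometry K C h) :
    IsQuasiIsometry (K * K') (K' * C + 2 * C') (g ∘ h) := by
  refine ⟨hg.1.comp hh.1 |>.weaken (by linarith [hg.1.2.1]), fun z => ?_⟩
  obtain ⟨y, hy⟩ := hg.2 z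
  obtain ⟨x, hx⟩ := hh.2 y
  refine ⟨x, (dist_triangle z (g y) (g (h x))).trans ?_⟩
  linarith [hg.1.dist_map_le_of_le hx]

lemma IsQuasiIsometry.exists_quasiInverse (hh : IsQuasiIsometry K C h) :
    ∃ ψ : Y → X, IsQuasiIsometry K (3 * K * C) ψ ∧ (∀ y, dist (h (ψ y)) y ≤ C) ∧
      ∀ x, dist (ψ (h x)) x ≤ 2 * K * C := by
  have hK := hh.1.pos
  have hC := hh.1.2.1
  choose ψ hψ using hh.2
  have hψ' : ∀ y, dist (h (ψ y)) y ≤ C := fun y => (dist_comm _ _).trans_le (hψ y)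
  have hψh : ∀ x, dist (ψ (h x)) x ≤ 2 * K * C := fun x => by
    have := hh.1.dist_le_of_dist_map_le (hψ' (h x))
    linarith
  refine ⟨ψ, ⟨⟨hh.1.1, by positivity, fun a b => ⟨?_, ?_⟩⟩, fun x => ⟨h x, ?_⟩⟩, hψ', hψh⟩
  · have h₁ := dist_triangle4 a (h (ψ a)) (h (ψ b)) b
    have h₂ := hh.1.dist_map_le_of_le (le_refl (dist (ψ a) (ψ b)))
    have h₃ : 3 * C ≤ K * (3 * K * C) := by
      nlinarith [mul_le_mul_of_nonneg_right (one_le_mul_of_one_le_of_one_le hh.1.1 hh.1.1) hC]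
    rw [sub_le_iff_le_add, inv_mul_le_iff₀ hK]
    linarith [hψ a, hψ' b]
  · have h₁ := dist_triangle4 (h (ψ a)) a b (h (ψ b))
    have h₂ : dist (h (ψ a)) (h (ψ b)) ≤ dist a b + 2 * C := by linarith [hψ a, hψ' a, hψ b]
    linarith [hh.1.dist_le_of_dist_map_le h₂]
  · rw [dist_comm]; linarith [hψh x, mul_nonneg hK.le hC]

lemma IsQIEmbedding.sub_le_gp_map (hh : IsQIEmbedding K C h) (w x y : X) :
    K⁻¹ * dist x w - K * dist x y - 2 * C ≤ gp (h w) (h x) (h y) := by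
  linarith [dist_sub_dist_le_gp (h w) (h x) (h y), hh.le_dist_map x w,
    hh.dist_map_le_of_le (le_refl (dist x y))]

lemma IsQIEmbedding.gp_map_self_ge (hh : IsQIEmbedding K C h) (w x : X) :
    dist x w / (2 * K) - 2 * C ≤ gp (h w) (h x) (h x) := by
  have hK := hh.pos
  have := hh.sub_le_gp_map w x x
  have : dist x w / (2 * K) ≤ K⁻¹ * dist x w := by
    rw [inv_mul_eq_div]; gcongr; linarith
  simp only [dist_self, mul_zero] at *
  linarith

lemma IsQIEmbedding.exists_forall_dist_le_of_conj {φ : X → Y} {ψ : Y → X} {f : X → X}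
    {K' C' D M : ℝ} (hφ : IsQIEmbedding K C φ) (hf : IsQIEmbedding K' C' f)
    (hψφ : ∀ x, dist (ψ (φ x)) x ≤ D) (hM : ∀ y, dist y (φ (f (ψ y))) ≤ M) :
    ∃ M', ∀ x, dist x (f x) ≤ M' :=
  ⟨K * (M + (K * (K' * D + C') + C) + C), fun x => hφ.dist_le_of_dist_map_le <|
    (dist_triangle _ (φ (f (ψ (φ x)))) _).trans <|
      add_le_add (hM (φ x)) (hφ.dist_map_le_of_le (hf.dist_map_le_of_le (hψφ x)))⟩

end QuasiIsometry

section GromovProductLowerBound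

variable [MetricSpace X] [MetricSpace Y] {δ K C : ℝ} {h : X → Y}

lemma IsQIEmbedding.gp_map_ge_of_isGeodSegment (hh : IsQIEmbedding K C h) (hδ : 0 ≤ δ)
    (hgY : GeodesicSpace Y) (hhY : DeltaHyp Y δ) {N : ℕ} (hN : 12 * K ^ 2 ≤ N)
    {γ : ℝ → X} {a b m : ℝ} (hγ : IsGeodSegment γ a b) (hab : a ≤ b) (hlen : b - a ≤ 6 * m)
    {w : X} (hfar : ∀ s ∈ Icc a b, m ≤ dist w (γ s)) :
    m / (2 * K) - (2 * C + 3 * δ * N) ≤ gp (h w) (h (γ a)) (h (γ b)) := by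
  have hK := hh.pos
  set ℓ := (b - a) / (N + 1)
  have hℓ : 0 ≤ ℓ := by positivity
  have hℓN : ℓ * (N + 1) = b - a := div_mul_cancel₀ _ (by positivity)
  set s : ℕ → ℝ := fun i => a + ℓ * i
  have hs : ∀ i ≤ N + 1, s i ∈ Icc a b := fun i hi => by
    have : (i : ℝ) ≤ N + 1 := by exact_mod_cast hi
    constructor <;> nlinarith
  have hKℓ : K * ℓ ≤ m / (2 * K) := by
    rw [le_div_iff₀ (by positivity)]
    nlinarith [mul_le_mul_of_nonneg_right (hN.trans (le_add_of_nonneg_right zero_le_one)) hℓ]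
  have hstep : ∀ i ≤ N, m / (2 * K) - 2 * C ≤ gp (h w) (h (γ (s i))) (h (γ (s (i + 1)))) := by
    intro i hi
    have hd : dist (γ (s i)) (γ (s (i + 1))) = ℓ := by
      rw [hγ.dist_eq (hs i (by omega)) (hs (i + 1) (by omega)) (by simp only [s]; push_cast; nlinarith)]
      simp [s]; ring
    have hm : m / K ≤ K⁻¹ * dist (γ (s i)) w := by
      rw [inv_mul_eq_div, dist_comm]; gcongr; exact hfar _ (hs i (by omega))
    have : m / K = m / (2 * K) + m / (2 * K) := by field_simp; ring
    have := hh.sub_le_gp_map w (γ (s i)) (γ (s (i + 1)))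
    rw [hd] at this
    linarith
  have hchain := hhY.sub_le_gp_of_chain hδ hgY N hstep
  have hs₀ : s 0 = a := by simp [s]
  have hsN : s (N + 1) = b := by simp only [s]; push_cast; linarith
  rw [hs₀, hsN] at hchain
  linarith

lemma IsQIEmbedding.gp_map_ge_of_outer_piece (hh : IsQIEmbedding K C h) (hδ : 0 ≤ δ)
    {N : ℕ} {r : ℝ} (hr : 0 ≤ r)
    (ih : ∀ w x y : X, 12 * δ * K ≤ gp w x y → dist x y ≤ r * gp w x y →
      gp w x y / (2 * K) - (2 * C + 3 * δ * N + 6 * δ) ≤ gp (h w) (h x) (h y))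
    {w x z : X} {m : ℝ} (hm : 12 * δ * K ≤ m)
    (hxz : x = z ∧ m ≤ dist x w ∨ 4 * m ≤ gp w x z ∧ dist x z ≤ r * m) :
    m / (2 * K) - (2 * C + 3 * δ * N) ≤ gp (h w) (h x) (h z) := by
  have hK := hh.pos
  have hm₀ : 0 ≤ m := (by positivity : 0 ≤ 12 * δ * K).trans hm
  have hδN : 0 ≤ 3 * δ * N := by positivity
  rcases hxz with ⟨rfl, hxw⟩ | ⟨hgp, hdist⟩
  · have : m / (2 * K) ≤ dist x w / (2 * K) := by gcongr
    linarith [hh.gp_map_self_ge w x]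
  · have := ih w x z (by linarith) (hdist.trans (by gcongr; linarith))
    have : m / (2 * K) + 6 * δ ≤ gp w x z / (2 * K) := by
      rw [show m / (2 * K) + 6 * δ = (m + 12 * δ * K) / (2 * K) by field_simp; ring]
      gcongr; linarith
    linarith

lemma IsQIEmbedding.gp_map_ge_of_dist_le_succ_mul (hh : IsQIEmbedding K C h) (hδ : 0 ≤ δ)
    (hgX : GeodesicSpace X) (hgY : GeodesicSpace Y) (hhY : DeltaHyp Y δ) {N : ℕ}
    (hN : 12 * K ^ 2 ≤ N) {r : ℝ} (hr : 0 ≤ r)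
    (ih : ∀ w x y : X, 12 * δ * K ≤ gp w x y → dist x y ≤ r * gp w x y →
      gp w x y / (2 * K) - (2 * C + 3 * δ * N + 6 * δ) ≤ gp (h w) (h x) (h y))
    {w x y : X} (hm : 12 * δ * K ≤ gp w x y) (hl : dist x y ≤ (r + 1) * gp w x y) :
    gp w x y / (2 * K) - (2 * C + 3 * δ * N + 6 * δ) ≤ gp (h w) (h x) (h y) := by
  obtain ⟨γ, hγ, hγ₀, hγL⟩ := hgX x y
  set m := gp w x y
  set L := dist x y
  have hm₀ := gp_nonneg w x y
  have hL := dist_nonneg (x := x) (y := y)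
  set t₀ := gp x y w
  have ht₀ : t₀ ∈ Icc 0 L := ⟨gp_nonneg _ _ _, by simpa [dist_comm] using gp_le_dist_left x y w⟩
  have hxw : t₀ + m = dist x w := gp_add_gp w x y
  have hyw : L - t₀ + m = dist y w := by
    linarith [gp_add_gp w y x, gp_add_gp_swap w x y, gp_comm w x y]
  set u₁ := max 0 (t₀ - 3 * m)
  set u₂ := min L (t₀ + 3 * m)
  have hu₁ : u₁ ∈ Icc 0 L := ⟨le_max_left _ _, max_le hL (by linarith [ht₀.2])⟩
  have hu₂ : u₂ ∈ Icc 0 L := ⟨le_min hL (by linarith [ht₀.1]), min_le_left _ _⟩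
  have hu₁₂ : u₁ ≤ u₂ := max_le hu₂.1 (le_min (by linarith [ht₀.2]) (by linarith))
  have hmid := hh.gp_map_ge_of_isGeodSegment hδ hgY hhY hN (hγ.mono hu₁.1 hu₂.2) hu₁₂
    (by linarith [min_le_right L (t₀ + 3 * m), le_max_right 0 (t₀ - 3 * m)]) (w := w)
    (m := m) fun s hs => by
      simpa [hγ₀, hγL] using hγ.gp_le_dist ⟨hu₁.1.trans hs.1, hs.2.trans hu₂.2⟩ w
  have hleft : m / (2 * K) - (2 * C + 3 * δ * N) ≤ gp (h w) (h x) (h (γ u₁)) := by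
    refine hh.gp_map_ge_of_outer_piece hδ hr ih hm ?_
    rcases le_total (t₀ - 3 * m) 0 with h₀ | h₀
    · have : u₁ = 0 := max_eq_left h₀
      exact Or.inl ⟨by rw [this, hγ₀], by linarith [ht₀.1]⟩
    · have hxu : dist x (γ u₁) = t₀ - 3 * m := by
        rw [← hγ₀, hγ.dist_eq (left_mem_Icc.2 hL) hu₁ hu₁.1, sub_zero]
        exact max_eq_right h₀
      refine Or.inr ⟨?_, by nlinarith [ht₀.2]⟩
      linarith [dist_sub_dist_le_gp w x (γ u₁)]
  have hright : m / (2 * K) - (2 * C + 3 * δ * N) ≤ gp (h w) (h (γ u₂)) (h y) := by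
    refine hh.gp_map_ge_of_outer_piece hδ hr ih hm ?_
    rcases le_total L (t₀ + 3 * m) with h₀ | h₀
    · have : u₂ = L := min_eq_left h₀
      rw [this, hγL]
      exact Or.inl ⟨rfl, by linarith [ht₀.2]⟩
    · have huy : dist (γ u₂) y = L - (t₀ + 3 * m) := by
        rw [← hγL, hγ.dist_eq hu₂ (right_mem_Icc.2 hL) hu₂.2]
        congr 1
        exact min_eq_right h₀
      refine Or.inr ⟨?_, by nlinarith [ht₀.1]⟩
      linarith [dist_sub_dist_le_gp w y (γ u₂), gp_comm w (γ u₂) y, dist_comm (γ u₂) y]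
  have h₁ := hhY.min_gp_sub_le hgY (h w) (h (γ u₁)) (h (γ u₂)) (h y)
  have h₂ := hhY.min_gp_sub_le hgY (h w) (h x) (h (γ u₁)) (h y)
  have hu₁y : m / (2 * K) - (2 * C + 3 * δ * N) - 3 * δ ≤ gp (h w) (h (γ u₁)) (h y) := by
    linarith [le_min hmid hright]
  have hxu₁ : m / (2 * K) - (2 * C + 3 * δ * N) - 3 * δ ≤ gp (h w) (h x) (h (γ u₁)) := by
    linarith
  linarith [le_min hxu₁ hu₁y]

lemma IsQIEmbedding.exists_gp_map_ge (hh : IsQIEmbedding K C h) (hδ : 0 ≤ δ)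
    (hgX : GeodesicSpace X) (hgY : GeodesicSpace Y) (hhY : DeltaHyp Y δ) :
    ∃ b, ∀ w x y : X, gp w x y / (2 * K) - b ≤ gp (h w) (h x) (h y) := by
  have hK := hh.pos
  obtain ⟨N, hN⟩ := exists_nat_ge (12 * K ^ 2)
  have key : ∀ n : ℕ, ∀ w x y : X, 12 * δ * K ≤ gp w x y → dist x y ≤ n * gp w x y →
      gp w x y / (2 * K) - (2 * C + 3 * δ * N + 6 * δ) ≤ gp (h w) (h x) (h y) := by
    intro n
    induction n with
    | zero =>
      intro w x y _ hl
      obtain rfl : x = y := dist_le_zero.1 (by simpa using hl)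
      rw [gp_self]
      have : 0 ≤ 3 * δ * N + 6 * δ := by positivity
      linarith [hh.gp_map_self_ge w x]
    | succ n ih =>
      intro w x y hm hl
      exact hh.gp_map_ge_of_dist_le_succ_mul hδ hgX hgY hhY hN n.cast_nonneg ih hm
        (by exact_mod_cast hl)
  refine ⟨2 * C + 3 * δ * N + 6 * δ, fun w x y => ?_⟩
  rcases le_or_gt (gp w x y) (12 * δ * K) with hsmall | hbig
  · have : gp w x y / (2 * K) ≤ 6 * δ := by
      rw [div_le_iff₀ (by positivity)]; linarith
    have : 0 ≤ 2 * C + 3 * δ * N := by have := hh.2.1; positivity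
    linarith [gp_nonneg (h w) (h x) (h y)]
  · have hgp : 0 < gp w x y := lt_of_le_of_lt (by positivity) hbig
    obtain ⟨n, hn⟩ := exists_nat_ge (dist x y / gp w x y)
    exact key n w x y hbig.le ((div_le_iff₀ hgp).1 hn)

lemma IsQIEmbedding.tendsto_gp_map (hh : IsQIEmbedding K C h) (hδ : 0 ≤ δ)
    (hgX : GeodesicSpace X) (hgY : GeodesicSpace Y) (hhY : DeltaHyp Y δ) {ι : Type*}
    {l : Filter ι} {x y : ι → X} {w : X} (ht : Tendsto (fun i => gp w (x i) (y i)) l atTop)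
    (w' : Y) : Tendsto (fun i => gp w' (h (x i)) (h (y i))) l atTop := by
  obtain ⟨b, hb⟩ := hh.exists_gp_map_ge hδ hgX hgY hhY
  refine tendsto_atTop_mono (fun i => ?_) (tendsto_atTop_add_const_right l
    (-(b + dist (h w) w')) (ht.atTop_div_const (by linarith [hh.pos] : (0 : ℝ) < 2 * K)))
  linarith [hb w (x i) (y i), gp_le_gp_add_dist_base (h w) w' (h (x i)) (h (y i))]

end GromovProductLowerBound

section GromovSeq

variable [MetricSpace X] [MetricSpace Y] {u v u' : ℕ → X} {c : ℝ}

lemma tendsto_gp_of_dist_le_left {ι : Type*} {l : Filter ι} {x x' y : ι → X} {w : X}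
    (ht : Tendsto (fun i => gp w (x i) (y i)) l atTop) (hc : ∀ i, dist (x i) (x' i) ≤ c) :
    Tendsto (fun i => gp w (x' i) (y i)) l atTop :=
  tendsto_atTop_mono (fun i => by linarith [gp_le_gp_add_dist_left w (x i) (x' i) (y i), hc i])
    (tendsto_atTop_add_const_right l (-c) ht)

lemma tendsto_gp_of_dist_le_right {ι : Type*} {l : Filter ι} {x y y' : ι → X} {w : X}
    (ht : Tendsto (fun i => gp w (x i) (y i)) l atTop) (hc : ∀ i, dist (y i) (y' i) ≤ c) :
    Tendsto (fun i => gp w (x i) (y' i)) l atTop :=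
  tendsto_atTop_mono (fun i => by linarith [gp_le_gp_add_dist_right w (x i) (y i) (y' i), hc i])
    (tendsto_atTop_add_const_right l (-c) ht)

lemma IsGromovSeq.of_dist_le (hu : IsGromovSeq u) (hc : ∀ i, dist (u i) (v i) ≤ c) :
    IsGromovSeq v := fun w =>
  tendsto_gp_of_dist_le_right (tendsto_gp_of_dist_le_left (hu w) fun p => hc p.1) fun p => hc p.2

lemma GromovEquiv.of_dist_le_left (huv : GromovEquiv u v) (hc : ∀ i, dist (u i) (u' i) ≤ c) :
    GromovEquiv u' v :=
  ⟨huv.1.of_dist_le hc, huv.2.1, fun w => tendsto_gp_of_dist_le_left (huv.2.2 w) hc⟩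

variable {δ K C : ℝ} {h : X → Y}

lemma IsGromovSeq.map (hu : IsGromovSeq u) (hh : IsQIEmbedding K C h) (hδ : 0 ≤ δ)
    (hgX : GeodesicSpace X) (hgY : GeodesicSpace Y) (hhY : DeltaHyp Y δ) :
    IsGromovSeq (h ∘ u) := fun w' =>
  hh.tendsto_gp_map hδ hgX hgY hhY (x := fun p : ℕ × ℕ => u p.1)
    (y := fun p => u p.2) (hu (u 0)) w'

lemma GromovEquiv.map (huv : GromovEquiv u v) (hh : IsQIEmbedding K C h) (hδ : 0 ≤ δ)
    (hgX : GeodesicSpace X) (hgY : GeodesicSpace Y) (hhY : DeltaHyp Y δ) :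
    GromovEquiv (h ∘ u) (h ∘ v) :=
  ⟨huv.1.map hh hδ hgX hgY hhY, huv.2.1.map hh hδ hgX hgY hhY, fun w' =>
    hh.tendsto_gp_map hδ hgX hgY hhY (huv.2.2 (u 0)) w'⟩

end GromovSeq

/-- **Proposition 2.7.** Boundary rigidity of geodesic δ-hyperbolic spaces is a
quasi-isometry invariant: if `φ : X → Y` is a `(λ,μ)`-quasi-isometry and `Y` is
boundary rigid, then so is `X`. -/
theorem boundaryRigid_of_quasiIsometry
    (X Y : Type*) [MetricSpace X] [MetricSpace Y] (δ : ℝ) (hδ : 0 ≤ δ)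
    (hgX : GeodesicSpace X) (hgY : GeodesicSpace Y)
    (hhX : DeltaHyp X δ) (hhY : DeltaHyp Y δ)
    (lam mu : ℝ) (φ : X → Y) (hφ : IsQuasiIsometry lam mu φ)
    (hY : BoundaryRigid Y) :
    BoundaryRigid X := by
  intro K C f hf hfb
  obtain ⟨ψ, hψ, hφψ, hψφ⟩ := hφ.exists_quasiInverse
  have hg : ∀ v : ℕ → Y, IsGromovSeq v → GromovEquiv v ((φ ∘ f ∘ ψ) ∘ v) := fun v hv =>
    ((hfb _ (hv.map hψ.1 hδ hgY hgX hhX)).map hφ.1 hδ hgX hgY hhY).of_dist_le_left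
      fun i => hφψ (v i)
  obtain ⟨M, hM⟩ := hY _ _ _ (hφ.comp (hf.comp hψ)) hg
  exact hφ.1.exists_forall_dist_le_of_conj hf.1 hψφ hM

end BoundaryRigidity
end

section
/- Let X be a proper geodesic δ-hyperbolic space and let [y,z] be a geodesic between points y,z ∈ X̄ = X ∪ ∂X. Then for every x ∈ X̄, the projection proj_{[y,z]}(x) is contained in the set Δ_{(1,0,10δ)}({x,y,z}) of (1,0,10δ)-quasi-centroids of {x,y,z}. -/
open Metric Filter Set

namespace BoundaryRigidity

universe u

variable {X : Type*} {Y : Type*}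

section Aux

variable [MetricSpace X]

lemma gp_base (w w' x y : X) : gp w' x y - dist w w' ≤ gp w x y := by
  have h1 := dist_triangle x w w'
  have h2 := dist_triangle y w w'
  unfold gp; linarith

lemma gp_lip (w x x' y : X) : gp w x' y - dist x x' ≤ gp w x y := by
  have h1 := dist_triangle x' x w
  have h2 := dist_triangle x x' y
  have h3 : dist x' x = dist x x' := dist_comm x' x
  unfold gp; linarith

lemma IsGeodSegment.continuousOn {g : ℝ → X} {α β : ℝ} (hg : IsGeodSegment g α β) :
    ContinuousOn g (Icc α β) := by
  have : LipschitzOnWith 1 g (Icc α β) := by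
    apply LipschitzOnWith.of_dist_le_mul
    intro s hs t ht
    rw [hg s hs t ht, Real.dist_eq]
    simp
  exact this.continuousOn

lemma gp_le_dist_of_geod (w : X) {g : ℝ → X} {α β : ℝ} (hαβ : α ≤ β)
    (hg : IsGeodSegment g α β) {t : ℝ} (ht : t ∈ Icc α β) :
    gp w (g α) (g β) ≤ dist w (g t) := by
  have hαm : α ∈ Icc α β := ⟨le_refl _, hαβ⟩
  have hβm : β ∈ Icc α β := ⟨hαβ, le_refl _⟩
  have h1 : dist (g α) (g t) = t - α := by
    rw [hg α hαm t ht, abs_of_nonpos (by linarith [ht.1])]; ring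
  have h2 : dist (g β) (g t) = β - t := by
    rw [hg β hβm t ht, abs_of_nonneg (by linarith [ht.2])]
  have h3 : dist (g α) (g β) = β - α := by
    rw [hg α hαm β hβm, abs_of_nonpos (by linarith)]; ring
  have t1 := dist_triangle (g α) (g t) w
  have t2 := dist_triangle (g β) (g t) w
  have c1 : dist w (g t) = dist (g t) w := dist_comm _ _
  unfold gp; linarith

lemma exists_dist_le_gp {δ : ℝ} (hgeo : GeodesicSpace X) (hhyp : DeltaHyp X δ)
    (w : X) {g : ℝ → X} {α β : ℝ} (hαβ : α ≤ β) (hg : IsGeodSegment g α β) :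
    ∃ t ∈ Icc α β, dist w (g t) ≤ gp w (g α) (g β) + 2 * δ := by
  obtain ⟨h₂, hh₂, hh₂0, hh₂e⟩ := hgeo (g β) w
  obtain ⟨h₃, hh₃, hh₃0, hh₃e⟩ := hgeo (g α) w
  have hαm : α ∈ Icc α β := ⟨le_refl _, hαβ⟩
  have hβm : β ∈ Icc α β := ⟨hαβ, le_refl _⟩
  have hdxz : dist (g α) (g β) = β - α := by
    rw [hg α hαm β hβm, abs_of_nonpos (by linarith)]; ring
  obtain ⟨tm, htmdef⟩ : ∃ tm, tm = α + gp (g α) w (g β) := ⟨_, rfl⟩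
  have hgpb : gp (g α) w (g β) ≤ dist (g α) (g β) := by
    have := gp_nonneg (g β) w (g α)
    have c1 : dist w (g β) = dist (g β) w := dist_comm _ _
    have c2 : dist w (g α) = dist (g α) w := dist_comm _ _
    have c5 : dist (g β) (g α) = dist (g α) (g β) := dist_comm _ _
    unfold gp at *; linarith
  have htm : tm ∈ Icc α β := by
    constructor
    · have := gp_nonneg (g α) w (g β); linarith
    · have := hgpb; rw [hdxz] at this; linarith
  obtain ⟨q, hq, hqd⟩ := hhyp g h₂ h₃ α β 0 (dist (g β) w) 0 (dist (g α) w)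
    hg hh₂ hh₃ hαβ dist_nonneg dist_nonneg (by rw [hh₃0]) (by rw [hh₂0])
    (by rw [hh₂e, hh₃e]) tm htm
  refine ⟨tm, htm, ?_⟩
  have hdxm : dist (g α) (g tm) = gp (g α) w (g β) := by
    rw [hg α hαm tm htm, abs_of_nonpos (by linarith [htm.1])]
    rw [htmdef]; ring
  have hdzm : dist (g β) (g tm) = β - tm := by
    rw [hg β hβm tm htm, abs_of_nonneg (by linarith [htm.2])]
  rcases hq with ⟨t, htI, rfl⟩ | ⟨t, htI, rfl⟩
  · -- q on the geodesic from g β to w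
    have hdzq : dist (g β) (h₂ t) = t := by
      have := hh₂ 0 ⟨le_refl _, dist_nonneg⟩ t htI
      rw [hh₂0] at this; rw [this, abs_of_nonpos (by linarith [htI.1])]; ring
    have hdqw : dist (h₂ t) w = dist (g β) w - t := by
      have := hh₂ t htI (dist (g β) w) ⟨dist_nonneg, le_refl _⟩
      rw [hh₂e] at this; rw [this, abs_of_nonpos (by linarith [htI.2])]; ring
    have ht1 : dist (g β) (g tm) ≤ dist (g β) (h₂ t) + dist (h₂ t) (g tm) :=
      dist_triangle _ _ _
    have ht2 : dist w (g tm) ≤ dist w (h₂ t) + dist (h₂ t) (g tm) :=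
      dist_triangle _ _ _
    have c1 : dist (h₂ t) (g tm) = dist (g tm) (h₂ t) := dist_comm _ _
    have c2 : dist w (h₂ t) = dist (h₂ t) w := dist_comm _ _
    have c3 : dist w (g β) = dist (g β) w := dist_comm _ _
    have c4 : dist w (g α) = dist (g α) w := dist_comm _ _
    have c5 : dist (g β) (g α) = dist (g α) (g β) := dist_comm _ _
    unfold gp at *; linarith
  · -- q on the geodesic from g α to w
    have hdxq : dist (g α) (h₃ t) = t := by
      have := hh₃ 0 ⟨le_refl _, dist_nonneg⟩ t htI
      rw [hh₃0] at this; rw [this, abs_of_nonpos (by linarith [htI.1])]; ring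
    have hdqw : dist (h₃ t) w = dist (g α) w - t := by
      have := hh₃ t htI (dist (g α) w) ⟨dist_nonneg, le_refl _⟩
      rw [hh₃e] at this; rw [this, abs_of_nonpos (by linarith [htI.2])]; ring
    have ht1 : dist (g α) (g tm) ≤ dist (g α) (h₃ t) + dist (h₃ t) (g tm) :=
      dist_triangle _ _ _
    have ht2 : dist w (g tm) ≤ dist w (h₃ t) + dist (h₃ t) (g tm) :=
      dist_triangle _ _ _
    have c1 : dist (h₃ t) (g tm) = dist (g tm) (h₃ t) := dist_comm _ _
    have c2 : dist w (h₃ t) = dist (h₃ t) w := dist_comm _ _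
    have c3 : dist w (g β) = dist (g β) w := dist_comm _ _
    have c4 : dist w (g α) = dist (g α) w := dist_comm _ _
    have c5 : dist (g β) (g α) = dist (g α) (g β) := dist_comm _ _
    unfold gp at *; linarith

lemma gp_four_point {δ : ℝ} (hgeo : GeodesicSpace X) (hhyp : DeltaHyp X δ)
    (w x y z : X) : min (gp w x y) (gp w y z) - 3 * δ ≤ gp w x z := by
  obtain ⟨g, hg, hg0, hge⟩ := hgeo x z
  obtain ⟨tm, htm, hm⟩ := exists_dist_le_gp hgeo hhyp w dist_nonneg hg
  rw [hg0, hge] at hm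
  obtain ⟨h₂, hh₂, hh₂0, hh₂e⟩ := hgeo z y
  obtain ⟨h₃, hh₃, hh₃0, hh₃e⟩ := hgeo x y
  obtain ⟨q, hq, hqd⟩ := hhyp g h₂ h₃ 0 (dist x z) 0 (dist z y) 0 (dist x y)
    hg hh₂ hh₃ dist_nonneg dist_nonneg dist_nonneg (by rw [hg0, hh₃0])
    (by rw [hge, hh₂0]) (by rw [hh₂e, hh₃e]) tm htm
  rcases hq with ⟨t, htI, rfl⟩ | ⟨t, htI, rfl⟩
  · have h1 : gp w z y ≤ dist w (h₂ t) := by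
      have := gp_le_dist_of_geod w dist_nonneg hh₂ htI
      rwa [hh₂0, hh₂e] at this
    have h2 : dist w (h₂ t) ≤ dist w (g tm) + dist (g tm) (h₂ t) := dist_triangle _ _ _
    have h3 : min (gp w x y) (gp w y z) ≤ gp w y z := min_le_right _ _
    have h4 : gp w y z = gp w z y := gp_comm w y z
    linarith
  · have h1 : gp w x y ≤ dist w (h₃ t) := by
      have := gp_le_dist_of_geod w dist_nonneg hh₃ htI
      rwa [hh₃0, hh₃e] at this
    have h2 : dist w (h₃ t) ≤ dist w (g tm) + dist (g tm) (h₃ t) := dist_triangle _ _ _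
    have h3 : min (gp w x y) (gp w y z) ≤ gp w x y := min_le_left _ _
    linarith

lemma proj_near {δ : ℝ} (hgeo : GeodesicSpace X) (hhyp : DeltaHyp X δ)
    {g : ℝ → X} {α β : ℝ} (hαβ : α ≤ β) (hg : IsGeodSegment g α β)
    (a : X) (hnear : ∀ t ∈ Icc α β, dist a (g β) ≤ dist a (g t))
    {σ : ℝ → X} (hσ : IsGeodSegment σ 0 (dist a (g α))) (hσ0 : σ 0 = a)
    (hσL : σ (dist a (g α)) = g α) :
    ∃ t ∈ Icc (0:ℝ) (dist a (g α)), dist (g β) (σ t) ≤ 3 * δ := by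
  obtain ⟨ς, hς, hς0, hςe⟩ := hgeo a (g β)
  have hDnn : (0:ℝ) ≤ dist a (g β) := dist_nonneg
  have h0L : (0:ℝ) ≤ dist a (g α) := dist_nonneg
  set E₂ := g '' Icc α β with hE₂def
  set E₃ := ς '' Icc 0 (dist a (g β)) with hE₃def
  have hE₂ne : E₂.Nonempty := ⟨g α, mem_image_of_mem _ ⟨le_rfl, hαβ⟩⟩
  have hE₃ne : E₃.Nonempty := ⟨a, ⟨0, ⟨le_rfl, hDnn⟩, hς0⟩⟩
  have hE₂c : IsCompact E₂ := isCompact_Icc.image_of_continuousOn hg.continuousOn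
  have hE₃c : IsCompact E₃ := isCompact_Icc.image_of_continuousOn hς.continuousOn
  have hσcont : ContinuousOn σ (Icc 0 (dist a (g α))) := hσ.continuousOn
  set f : ℝ → ℝ := fun s => infDist (σ s) E₃ - infDist (σ s) E₂ with hfdef
  have hfc : ContinuousOn f (Icc 0 (dist a (g α))) :=
    ((continuous_infDist_pt E₃).comp_continuousOn hσcont).sub
      ((continuous_infDist_pt E₂).comp_continuousOn hσcont)
  have hf0 : f 0 ≤ 0 := by
    have h1 : infDist (σ 0) E₃ = 0 := by
      rw [hσ0]; exact infDist_zero_of_mem ⟨0, ⟨le_rfl, hDnn⟩, hς0⟩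
    have h2 : 0 ≤ infDist (σ 0) E₂ := infDist_nonneg
    simp only [hfdef]; linarith
  have hfL : 0 ≤ f (dist a (g α)) := by
    have h1 : infDist (σ (dist a (g α))) E₂ = 0 := by
      rw [hσL]; exact infDist_zero_of_mem (mem_image_of_mem _ ⟨le_rfl, hαβ⟩)
    have h2 : 0 ≤ infDist (σ (dist a (g α))) E₃ := infDist_nonneg
    simp only [hfdef]; linarith
  obtain ⟨s, hs, hfs⟩ := intermediate_value_Icc h0L hfc ⟨hf0, hfL⟩
  obtain ⟨q₀, hq₀, hq₀d⟩ := hhyp σ g ς 0 (dist a (g α)) α β 0 (dist a (g β))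
    hσ hg hς h0L hαβ hDnn (by rw [hσ0, hς0]) (by rw [hσL]) (by rw [hςe]) s hs
  have hmin : infDist (σ s) E₂ ≤ δ ∨ infDist (σ s) E₃ ≤ δ := by
    rcases hq₀ with ⟨t, ht, rfl⟩ | ⟨t, ht, rfl⟩
    · left; exact le_trans (infDist_le_dist_of_mem (mem_image_of_mem _ ht)) hq₀d
    · right; exact le_trans (infDist_le_dist_of_mem (mem_image_of_mem _ ht)) hq₀d
  have heq : infDist (σ s) E₃ = infDist (σ s) E₂ := by
    have : f s = 0 := hfs
    simp only [hfdef] at this; linarith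
  have hboth2 : infDist (σ s) E₂ ≤ δ := by rcases hmin with h | h <;> linarith
  have hboth3 : infDist (σ s) E₃ ≤ δ := by rcases hmin with h | h <;> linarith
  obtain ⟨r, hrE, hrd⟩ := hE₂c.exists_infDist_eq_dist hE₂ne (σ s)
  obtain ⟨q, hqE, hqd2⟩ := hE₃c.exists_infDist_eq_dist hE₃ne (σ s)
  rw [hrd] at hboth2
  rw [hqd2] at hboth3
  obtain ⟨tr, htr, rfl⟩ := hrE
  obtain ⟨tq, htq, rfl⟩ := hqE
  have hds : dist a (σ s) = s := by
    rw [← hσ0, hσ 0 ⟨le_rfl, h0L⟩ s hs, abs_of_nonpos (by linarith [hs.1])]; ring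
  have h1 : dist a (g β) ≤ dist a (g tr) := hnear tr htr
  have h2 : dist a (g tr) ≤ dist a (σ s) + dist (σ s) (g tr) := dist_triangle _ _ _
  have hq_a : dist a (ς tq) = tq := by
    rw [← hς0, hς 0 ⟨le_rfl, hDnn⟩ tq htq, abs_of_nonpos (by linarith [htq.1])]; ring
  have h3 : dist a (ς tq) + dist (ς tq) (σ s) ≥ dist a (σ s) := by
    have := dist_triangle a (ς tq) (σ s); linarith
  have h4 : dist (ς tq) (g β) = dist a (g β) - tq := by
    have h4' : dist (ς tq) (ς (dist a (g β))) = dist a (g β) - tq := by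
      rw [hς tq htq (dist a (g β)) ⟨hDnn, le_rfl⟩,
        abs_of_nonpos (by linarith [htq.2])]; ring
    rw [hςe] at h4'; exact h4'
  have h5 : dist (g β) (σ s) ≤ dist (g β) (ς tq) + dist (ς tq) (σ s) := dist_triangle _ _ _
  have c1 : dist (g β) (ς tq) = dist (ς tq) (g β) := dist_comm _ _
  have c2 : dist (ς tq) (σ s) = dist (σ s) (ς tq) := dist_comm _ _
  exact ⟨s, hs, by linarith⟩


lemma side_exists [ProperSpace X] {δ : ℝ} (hδ : 0 ≤ δ)
    (hgeo : GeodesicSpace X) (hhyp : DeltaHyp X δ)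
    (γ : ℝ → X) (I : Set ℝ) (hord : I.OrdConnected)
    (hdist : ∀ s ∈ I, ∀ t ∈ I, dist (γ s) (γ t) = |s - t|)
    (y : X ⊕ (ℕ → X)) (hL : LeftEnd γ I y)
    (a : X) (s₀ : ℝ) (hs₀ : s₀ ∈ I) (hnear : ∀ t ∈ I, dist a (γ s₀) ≤ dist a (γ t)) :
    ∃ (σ : ℝ → X) (J : Set ℝ), IsQGeodJoining 1 0 σ J (Sum.inl a) y ∧
      ∃ t ∈ J, dist (γ s₀) (σ t) ≤ 3 * δ := by
  cases y with
  | inl b =>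
    obtain ⟨sm, hsmI, hsmb, hsmin⟩ := hL
    subst hsmb
    obtain ⟨σ, hσ, hσ0, hσe⟩ := hgeo a (γ sm)
    have hsm0 : sm ≤ s₀ := hsmin s₀ hs₀
    have hsub : Icc sm s₀ ⊆ I := hord.out hsmI hs₀
    have hseg : IsGeodSegment γ sm s₀ := fun s hs t ht => hdist s (hsub hs) t (hsub ht)
    have hnear' : ∀ t ∈ Icc sm s₀, dist a (γ s₀) ≤ dist a (γ t) :=
      fun t ht => hnear t (hsub ht)
    obtain ⟨t, ht, htd⟩ := proj_near hgeo hhyp hsm0 hseg a hnear' hσ hσ0 hσe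
    refine ⟨σ, Icc 0 (dist a (γ sm)),
      ⟨⟨0, le_rfl, dist_nonneg⟩, ordConnected_Icc, ?_, ?_, ?_⟩, t, ht, htd⟩
    · intro s hs t' ht'
      rw [hσ s hs t' ht']
      norm_num
    · exact ⟨0, ⟨le_rfl, dist_nonneg⟩, hσ0, fun t' ht' => ht'.1⟩
    · exact ⟨dist a (γ sm), ⟨dist_nonneg, le_rfl⟩, hσe, fun t' ht' => ht'.2⟩
  | inr u =>
    obtain ⟨τ, hτI, hτBot, hGS1, hGSu, hprod⟩ := hL
    have hch : ∀ n : ℕ, ∃ σ : ℝ → X, IsGeodSegment σ 0 (dist a (γ (τ n))) ∧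
        σ 0 = a ∧ σ (dist a (γ (τ n))) = γ (τ n) := fun n => hgeo a (γ (τ n))
    choose σn hσn hσn0 hσne using hch
    set D := dist a (γ s₀) with hDdef
    set L : ℕ → ℝ := fun n => dist a (γ (τ n)) with hLdef
    have hLnn : ∀ n, 0 ≤ L n := fun n => dist_nonneg
    have hLtop : Tendsto L atTop atTop := by
      have key : ∀ n, (s₀ - τ n) + (-D) ≤ L n := by
        intro n
        have h := dist_triangle (γ s₀) a (γ (τ n))
        have e := hdist s₀ hs₀ (τ n) (hτI n)
        have c1 : dist (γ s₀) a = D := dist_comm _ _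
        have habs : s₀ - τ n ≤ |s₀ - τ n| := le_abs_self _
        simp only [hLdef]; rw [e] at h; linarith
      have h1 : Tendsto (fun n => s₀ - τ n) atTop atTop := by
        rw [Filter.tendsto_atTop]; intro b
        filter_upwards [hτBot.eventually (eventually_le_atBot (s₀ - b))] with n hn
        linarith
      exact tendsto_atTop_mono key (tendsto_atTop_add_const_right _ (-D) h1)
    set 𝒰 : Ultrafilter ℕ := Ultrafilter.of atTop with h𝒰def
    have h𝒰 : (𝒰 : Filter ℕ) ≤ atTop := Ultrafilter.of_le _
    set seq : ℝ → ℕ → X := fun t n => σn n (min (max t 0) (L n)) with hseqdef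
    have hseqmem : ∀ (t : ℝ) (n : ℕ), min (max t 0) (L n) ∈ Icc 0 (L n) :=
      fun t n => ⟨le_min (le_max_right _ _) (hLnn n), min_le_right _ _⟩
    have hseqdist : ∀ (t : ℝ) (n : ℕ), dist a (seq t n) = min (max t 0) (L n) := by
      intro t n
      have h := hσn n 0 ⟨le_rfl, hLnn n⟩ _ (hseqmem t n)
      rw [hσn0 n] at h
      simp only [hseqdef]
      rw [h, abs_of_nonpos (by linarith [(hseqmem t n).1])]; ring
    have hFex : ∀ t : ℝ, ∃ x : X, Tendsto (seq t) (𝒰 : Filter ℕ) (nhds x) := by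
      intro t
      have hcb : IsCompact (closedBall a (max t 0)) := isCompact_closedBall a _
      have hmem : ∀ n, seq t n ∈ closedBall a (max t 0) := by
        intro n
        rw [mem_closedBall, dist_comm, hseqdist t n]
        exact min_le_left _ _
      have hmm : (𝒰.map (seq t) : Filter X) ≤ 𝓟 (closedBall a (max t 0)) := by
        rw [Ultrafilter.coe_map]
        exact le_principal_iff.mpr (mem_map.mpr (Filter.Eventually.of_forall hmem))
      obtain ⟨x, _, hconv⟩ := hcb.ultrafilter_le_nhds (𝒰.map (seq t)) hmm
      rw [Ultrafilter.coe_map] at hconv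
      exact ⟨x, hconv⟩
    choose F hF using hFex
    have hF0 : F 0 = a := by
      apply tendsto_nhds_unique (hF 0)
      have hc : ∀ n, seq 0 n = a := by
        intro n
        simp only [hseqdef]
        rw [max_self, min_eq_left (hLnn n), hσn0 n]
      exact Tendsto.congr (fun n => (hc n).symm) tendsto_const_nhds
    have hFdist : ∀ s ∈ Ici (0:ℝ), ∀ t ∈ Ici (0:ℝ), dist (F s) (F t) = |s - t| := by
      intro s hs t ht
      have hev : ∀ᶠ n in (𝒰 : Filter ℕ), dist (seq s n) (seq t n) = |s - t| := by
        have h1 : ∀ᶠ n in atTop, max s t ≤ L n :=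
          hLtop.eventually (eventually_ge_atTop (max s t))
        refine (h1.filter_mono h𝒰).mono ?_
        intro n hn
        have hms : min (max s 0) (L n) = s := by
          rw [max_eq_left hs]; exact min_eq_left (le_trans (le_max_left _ _) hn)
        have hmt : min (max t 0) (L n) = t := by
          rw [max_eq_left ht]; exact min_eq_left (le_trans (le_max_right _ _) hn)
        simp only [hseqdef]
        rw [hms, hmt]
        exact hσn n s ⟨hs, le_trans (le_max_left _ _) hn⟩ t ⟨ht, le_trans (le_max_right _ _) hn⟩
      exact tendsto_nhds_unique ((hF s).dist (hF t))
        (Tendsto.congr' (hev.mono fun n h => h.symm) tendsto_const_nhds)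
    -- the point near the projection
    have htn : ∀ n : ℕ, ∃ t, t ∈ Icc (0:ℝ) (L n) ∧ (τ n ≤ s₀ → dist (γ s₀) (σn n t) ≤ 3 * δ) := by
      intro n
      by_cases hc : τ n ≤ s₀
      · have hsub : Icc (τ n) s₀ ⊆ I := hord.out (hτI n) hs₀
        have hseg : IsGeodSegment γ (τ n) s₀ := fun s hs t ht => hdist s (hsub hs) t (hsub ht)
        have hnear' : ∀ t ∈ Icc (τ n) s₀, dist a (γ s₀) ≤ dist a (γ t) :=
          fun t ht => hnear t (hsub ht)
        obtain ⟨t, ht, htd⟩ := proj_near hgeo hhyp hc hseg a hnear' (hσn n) (hσn0 n) (hσne n)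
        exact ⟨t, ht, fun _ => htd⟩
      · exact ⟨0, ⟨le_rfl, hLnn n⟩, fun h => absurd h hc⟩
    choose tn htnmem htnd using htn
    have hGev : ∀ᶠ n in (𝒰 : Filter ℕ), τ n ≤ s₀ :=
      (hτBot.eventually (eventually_le_atBot s₀)).filter_mono h𝒰
    have hdtn : ∀ n, dist a (σn n (tn n)) = tn n := by
      intro n
      have h := hσn n 0 ⟨le_rfl, hLnn n⟩ (tn n) (htnmem n)
      rw [hσn0 n] at h
      rw [h, abs_of_nonpos (by linarith [(htnmem n).1])]; ring
    have htnb : ∀ᶠ n in (𝒰 : Filter ℕ), tn n ∈ Icc (0:ℝ) (D + 3*δ) := by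
      filter_upwards [hGev] with n hn
      have h2 : dist a (σn n (tn n)) ≤ dist a (γ s₀) + dist (γ s₀) (σn n (tn n)) :=
        dist_triangle _ _ _
      refine ⟨(htnmem n).1, ?_⟩
      have h3 := htnd n hn
      have h4 := hdtn n
      simp only [hDdef]; linarith
    have hmm2 : (𝒰.map tn : Filter ℝ) ≤ 𝓟 (Icc (0:ℝ) (D + 3*δ)) := by
      rw [Ultrafilter.coe_map]
      exact le_principal_iff.mpr (mem_map.mpr htnb)
    obtain ⟨tstar, htstar, htconv⟩ :=
      (isCompact_Icc (a := (0:ℝ)) (b := D + 3*δ)).ultrafilter_le_nhds (𝒰.map tn) hmm2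
    have htst : Tendsto tn (𝒰 : Filter ℕ) (nhds tstar) := by
      rw [Ultrafilter.coe_map] at htconv
      exact htconv
    have hFnear : dist (γ s₀) (F tstar) ≤ 3 * δ := by
      have hLev : ∀ᶠ n in (𝒰 : Filter ℕ), D + 3*δ ≤ L n :=
        (hLtop.eventually (eventually_ge_atTop _)).filter_mono h𝒰
      have hd : Tendsto (fun n => dist (γ s₀) (seq tstar n)) (𝒰 : Filter ℕ)
          (nhds (dist (γ s₀) (F tstar))) := tendsto_const_nhds.dist (hF tstar)
      have hub : Tendsto (fun n => |tn n - tstar| + 3*δ) (𝒰 : Filter ℕ) (nhds (3*δ)) := by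
        have := ((htst.sub (tendsto_const_nhds (x := tstar))).abs.add
          (tendsto_const_nhds (x := 3*δ)))
        simpa using this
      refine le_of_tendsto_of_tendsto hd hub ?_
      filter_upwards [hGev, hLev] with n h1 h2
      have hts : min (max tstar 0) (L n) = tstar := by
        rw [max_eq_left htstar.1]; exact min_eq_left (le_trans htstar.2 h2)
      have e1 : dist (σn n (tn n)) (σn n tstar) = |tn n - tstar| := by
        have := hσn n (tn n) (htnmem n) tstar ⟨htstar.1, le_trans htstar.2 h2⟩
        exact this
      have e2 := htnd n h1
      have e3 : dist (γ s₀) (seq tstar n) ≤ dist (γ s₀) (σn n (tn n)) +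
          dist (σn n (tn n)) (σn n tstar) := by
        simp only [hseqdef]; rw [hts]; exact dist_triangle _ _ _
      rw [e1] at e3
      linarith
    -- Gromov product facts for F
    have hFgp : ∀ s ∈ Ici (0:ℝ), ∀ t ∈ Ici (0:ℝ), gp a (F s) (F t) = min s t := by
      intro s hs t ht
      have h1 : dist a (F s) = s := by
        have := hFdist 0 self_mem_Ici s hs
        rw [hF0] at this
        rw [this, abs_of_nonpos (by linarith [mem_Ici.mp hs])]; ring
      have h2 : dist a (F t) = t := by
        have := hFdist 0 self_mem_Ici t ht
        rw [hF0] at this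
        rw [this, abs_of_nonpos (by linarith [mem_Ici.mp ht])]; ring
      have h3 := hFdist s hs t ht
      unfold gp
      rw [dist_comm (F s) a, dist_comm (F t) a, h1, h2, h3]
      rcases le_total s t with h | h
      · rw [abs_of_nonpos (by linarith), min_eq_left h]; ring
      · rw [abs_of_nonneg (by linarith), min_eq_right h]; ring
    have hminTop : Tendsto (fun pr : ℕ × ℕ => min ((pr.1 : ℝ)) ((pr.2 : ℝ))) atTop atTop := by
      rw [Filter.tendsto_atTop]; intro b
      rw [eventually_atTop]
      obtain ⟨m, hm⟩ := exists_nat_ge b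
      refine ⟨(m, m), fun pr hpr => ?_⟩
      exact le_min (le_trans hm (Nat.cast_le.mpr hpr.1)) (le_trans hm (Nat.cast_le.mpr hpr.2))
    have hFGS : IsGromovSeq (fun m : ℕ => F m) := by
      intro w
      have hge : ∀ pr : ℕ × ℕ, min ((pr.1:ℝ)) ((pr.2:ℝ)) + (- dist w a) ≤
          gp w (F pr.1) (F pr.2) := by
        intro pr
        have hb := gp_base w a (F pr.1) (F pr.2)
        rw [hFgp _ (mem_Ici.mpr (Nat.cast_nonneg _)) _ (mem_Ici.mpr (Nat.cast_nonneg _))] at hb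
        linarith
      exact tendsto_atTop_mono hge (tendsto_atTop_add_const_right _ _ hminTop)
    -- key Gromov product estimate
    have hkey : ∀ i j : ℕ, τ j ≤ s₀ →
        min ((i:ℝ) - δ) (s₀ - τ j - D - δ) ≤ gp a (F i) (γ (τ j)) := by
      intro i j hji
      have hev : ∀ᶠ n in (𝒰 : Filter ℕ),
          min ((i:ℝ) - δ) (s₀ - τ j - D - δ) ≤ gp a (seq (i:ℝ) n) (γ (τ j)) := by
        have hev1 : ∀ᶠ n in (𝒰 : Filter ℕ), (i:ℝ) ≤ L n :=
          (hLtop.eventually (eventually_ge_atTop _)).filter_mono h𝒰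
        have hev2 : ∀ᶠ n in (𝒰 : Filter ℕ), τ n ≤ τ j :=
          (hτBot.eventually (eventually_le_atBot (τ j))).filter_mono h𝒰
        filter_upwards [hev1, hev2] with n h1 h2
        obtain ⟨ρ, hρ, hρ0, hρe⟩ := hgeo a (γ (τ j))
        have hsub : Icc (τ n) (τ j) ⊆ I := hord.out (hτI n) (hτI j)
        have hseg : IsGeodSegment γ (τ n) (τ j) :=
          fun s hs t ht => hdist s (hsub hs) t (hsub ht)
        have hsimem : (i:ℝ) ∈ Icc 0 (L n) := ⟨Nat.cast_nonneg i, h1⟩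
        obtain ⟨q, hq, hqd⟩ := hhyp (σn n) γ ρ 0 (L n) (τ n) (τ j) 0 (dist a (γ (τ j)))
          (hσn n) hseg hρ (hLnn n) h2 dist_nonneg (by rw [hσn0 n, hρ0])
          (by rw [hσne n]) (by rw [hρe]) (i:ℝ) hsimem
        have hsi : seq (i:ℝ) n = σn n (i:ℝ) := by
          simp only [hseqdef]
          rw [max_eq_left (Nat.cast_nonneg i), min_eq_left h1]
        rw [hsi]
        have hdai : dist a (σn n (i:ℝ)) = (i:ℝ) := by
          have h := hσn n 0 ⟨le_rfl, hLnn n⟩ (i:ℝ) hsimem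
          rw [hσn0 n] at h
          rw [h, abs_of_nonpos (by linarith [hsimem.1])]; ring
        rcases hq with ⟨t, ht, rfl⟩ | ⟨t, ht, rfl⟩
        · -- q on γ between τ n and τ j
          have hlip := gp_lip a (σn n (i:ℝ)) (γ t) (γ (τ j))
          have htI' : t ∈ I := hsub ht
          have e1 : dist (γ t) (γ s₀) = s₀ - t := by
            rw [hdist t htI' s₀ hs₀, abs_of_nonpos (by linarith [ht.2])]; ring
          have e2 : dist (γ (τ j)) (γ s₀) = s₀ - τ j := by
            rw [hdist (τ j) (hτI j) s₀ hs₀, abs_of_nonpos (by linarith)]; ring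
          have e3 : dist (γ t) (γ (τ j)) = τ j - t := by
            rw [hdist t htI' (τ j) (hτI j), abs_of_nonpos (by linarith [ht.2])]; ring
          have t1 : dist (γ t) (γ s₀) ≤ dist (γ t) a + D := by
            have := dist_triangle (γ t) a (γ s₀); simp only [hDdef]; linarith
          have t2 : dist (γ (τ j)) (γ s₀) ≤ dist (γ (τ j)) a + D := by
            have := dist_triangle (γ (τ j)) a (γ s₀); simp only [hDdef]; linarith
          have hglow : s₀ - τ j - D ≤ gp a (γ t) (γ (τ j)) := by
            unfold gp; rw [e3]; linarith
          have hmin2 : min ((i:ℝ) - δ) (s₀ - τ j - D - δ) ≤ s₀ - τ j - D - δ :=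
            min_le_right _ _
          linarith
        · -- q on ρ from a to γ (τ j)
          have htt : dist a (ρ t) = t := by
            have h := hρ 0 ⟨le_rfl, dist_nonneg⟩ t ht
            rw [hρ0] at h
            rw [h, abs_of_nonpos (by linarith [ht.1])]; ring
          have h5 : dist (ρ t) (γ (τ j)) = dist a (γ (τ j)) - t := by
            have h5' := hρ t ht (dist a (γ (τ j))) ⟨dist_nonneg, le_rfl⟩
            rw [hρe] at h5'
            rw [h5', abs_of_nonpos (by linarith [ht.2])]; ring
          have t1 : dist a (ρ t) ≥ dist a (σn n (i:ℝ)) - dist (σn n (i:ℝ)) (ρ t) := by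
            have h := dist_triangle a (ρ t) (σn n (i:ℝ))
            have c := dist_comm (ρ t) (σn n (i:ℝ))
            linarith
          have t2 : dist (σn n (i:ℝ)) (γ (τ j)) ≤ dist (σn n (i:ℝ)) (ρ t) +
              dist (ρ t) (γ (τ j)) := dist_triangle _ _ _
          have c1 : dist (σn n (i:ℝ)) a = (i:ℝ) := by rw [dist_comm]; exact hdai
          have c2 : dist (γ (τ j)) a = dist a (γ (τ j)) := dist_comm _ _
          have hmin1 : min ((i:ℝ) - δ) (s₀ - τ j - D - δ) ≤ (i:ℝ) - δ := min_le_left _ _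
          unfold gp
          linarith
      have hcont : Tendsto (fun n => gp a (seq (i:ℝ) n) (γ (τ j))) (𝒰 : Filter ℕ)
          (nhds (gp a (F i) (γ (τ j)))) := by
        unfold gp
        exact ((((hF (i:ℝ)).dist tendsto_const_nhds).add tendsto_const_nhds).sub
          ((hF (i:ℝ)).dist tendsto_const_nhds)).div_const 2
      exact ge_of_tendsto hcont hev
    have hα : Tendsto (fun i : ℕ => gp a (F i) (γ (τ i))) atTop atTop := by
      rw [Filter.tendsto_atTop]; intro b
      have h1 : ∀ᶠ i : ℕ in atTop, τ i ≤ s₀ := hτBot.eventually (eventually_le_atBot s₀)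
      have h2 : ∀ᶠ i : ℕ in atTop, b + δ ≤ (i:ℝ) :=
        tendsto_natCast_atTop_atTop.eventually (eventually_ge_atTop _)
      have h3 : ∀ᶠ i : ℕ in atTop, τ i ≤ s₀ - D - δ - b :=
        hτBot.eventually (eventually_le_atBot _)
      filter_upwards [h1, h2, h3] with i hi1 hi2 hi3
      have hk := hkey i i hi1
      have hm : b ≤ min ((i:ℝ) - δ) (s₀ - τ i - D - δ) := le_min (by linarith) (by linarith)
      linarith
    have hequivA : Tendsto (fun i : ℕ => gp a (F i) (u i)) atTop atTop := by
      have h4 := hprod a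
      rw [Filter.tendsto_atTop]; intro b
      filter_upwards [hα.eventually (eventually_ge_atTop (b + 3*δ)),
        h4.eventually (eventually_ge_atTop (b + 3*δ))] with i hi1 hi2
      have hfp := gp_four_point hgeo hhyp a (F i) (γ (τ i)) (u i)
      have hm : b + 3*δ ≤ min (gp a (F i) (γ (τ i))) (gp a (γ (τ i)) (u i)) :=
        le_min hi1 hi2
      linarith
    have hequiv : ∀ w, Tendsto (fun i : ℕ => gp w (F i) (u i)) atTop atTop := by
      intro w
      rw [Filter.tendsto_atTop]; intro b
      filter_upwards [hequivA.eventually (eventually_ge_atTop (b + dist w a))] with i hi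
      have := gp_base w a (F i) (u i)
      linarith
    refine ⟨F, Ici 0, ⟨⟨0, self_mem_Ici⟩, ordConnected_Ici, ?_, ?_, ?_⟩, tstar,
      mem_Ici.mpr htstar.1, hFnear⟩
    · intro s hs t ht
      rw [hFdist s hs t ht]
      norm_num
    · exact ⟨0, self_mem_Ici, hF0, fun t ht => ht⟩
    · exact ⟨fun m => (m:ℝ), fun m => mem_Ici.mpr (Nat.cast_nonneg m),
        tendsto_natCast_atTop_atTop, hFGS, hGSu, hequiv⟩


end Aux


/-- **Lemma 3.5.** For any geodesic `[y,z]` between points of `X̄` and any `x ∈ X̄`,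
`proj_{[y,z]}(x) ⊆ Δ_{(1,0,10δ)}({x,y,z})`. -/
theorem projSet_subset_quasiCentroids
    (X : Type*) [MetricSpace X] [ProperSpace X] (δ : ℝ) (hδ : 0 ≤ δ)
    (hgeo : GeodesicSpace X) (hhyp : DeltaHyp X δ)
    (y z x : X ⊕ (ℕ → X)) (hy : IsXBarPt y) (hz : IsXBarPt z) (hx : IsXBarPt x)
    (γ : ℝ → X) (I : Set ℝ) (hγ : IsGeodJoining γ I y z) :
    projSet δ γ I y z x ⊆ {p : X | IsQuasiCentroid 1 0 (10 * δ) p x y z} := by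
  intro p hp
  obtain ⟨hIne, hIord, hIdist, hLy, hRz⟩ := hγ
  cases x with
  | inr u =>
    obtain ⟨γ₁, γ₂, γ₃, I₁, I₂, I₃, h1, h2, h3, ⟨s1, hs1, hd1⟩, ⟨s2, hs2, hd2⟩,
      ⟨s3, hs3, hd3⟩⟩ := hp
    exact ⟨γ₁, γ₂, γ₃, I₁, I₂, I₃, h1, h2, h3, ⟨s1, hs1, by linarith⟩,
      ⟨s2, hs2, by linarith⟩, ⟨s3, hs3, by linarith⟩⟩
  | inl a =>
    obtain ⟨s₀, hs₀, rfl, hnear⟩ := hp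
    obtain ⟨σ₁, J₁, hJ₁, t₁, ht₁, hd₁⟩ :=
      side_exists hδ hgeo hhyp γ I hIord hIdist y hLy a s₀ hs₀ hnear
    set γ' : ℝ → X := fun t => γ (-t) with hγ'def
    set I' : Set ℝ := (fun t : ℝ => -t) ⁻¹' I with hI'def
    have hord' : I'.OrdConnected := by
      constructor
      intro s hs t ht c hc
      have : -c ∈ Icc (-t) (-s) := ⟨by linarith [hc.2], by linarith [hc.1]⟩
      exact hIord.out ht hs this
    have hdist' : ∀ s ∈ I', ∀ t ∈ I', dist (γ' s) (γ' t) = |s - t| := by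
      intro s hs t ht
      have h := hIdist (-s) hs (-t) ht
      simp only [hγ'def]
      rw [h, abs_sub_comm]
      congr 1; ring
    have hL' : LeftEnd γ' I' z := by
      cases z with
      | inl c =>
        obtain ⟨sp, hspI, hspc, hspmax⟩ := hRz
        refine ⟨-sp, ?_, ?_, ?_⟩
        · simp only [hI'def, mem_preimage, neg_neg]; exact hspI
        · simp only [hγ'def, neg_neg]; exact hspc
        · intro t ht
          have := hspmax (-t) ht
          linarith
      | inr v =>
        obtain ⟨σz, hσzI, hσzTop, hσzEq⟩ := hRz
        refine ⟨fun n => -(σz n), ?_, ?_, ?_⟩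
        · intro n; simp only [hI'def, mem_preimage, neg_neg]; exact hσzI n
        · exact tendsto_neg_atTop_atBot.comp hσzTop
        · have : (fun n => γ' (-(σz n))) = fun n => γ (σz n) := by
            funext n; simp only [hγ'def, neg_neg]
          rw [this]; exact hσzEq
    have hs₀' : -s₀ ∈ I' := by simp only [hI'def, mem_preimage, neg_neg]; exact hs₀
    have hnear' : ∀ t ∈ I', dist a (γ' (-s₀)) ≤ dist a (γ' t) := by
      intro t ht
      simp only [hγ'def, neg_neg]
      exact hnear (-t) ht
    obtain ⟨σ₃, J₃, hJ₃, t₃, ht₃, hd₃⟩ :=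
      side_exists hδ hgeo hhyp γ' I' hord' hdist' z hL' a (-s₀) hs₀' hnear'
    have hJ₂ : IsQGeodJoining 1 0 γ I y z :=
      ⟨hIne, hIord, fun s hs t ht => by rw [hIdist s hs t ht]; norm_num, hLy, hRz⟩
    have hd₃' : dist (γ s₀) (σ₃ t₃) ≤ 3 * δ := by
      simp only [hγ'def, neg_neg] at hd₃
      exact hd₃
    exact ⟨σ₁, γ, σ₃, J₁, I, J₃, hJ₁, hJ₂, hJ₃, ⟨t₁, ht₁, by linarith⟩,
      ⟨s₀, hs₀, by rw [dist_self]; linarith⟩, ⟨t₃, ht₃, by linarith⟩⟩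

end BoundaryRigidity
end

section
/- In the setup below, let w ∉ X_y(2D) ∪ X_z(2D) and let u be a point on [y,z] closest to w. Then u is also a point on [o,ξ] closest to w. -/
open Metric Filter Set

namespace BoundaryRigidity

universe u

variable {X : Type*} {Y : Type*}

section Lemma37Aux

variable {X : Type*}

/-- Key projection inequality (one-sided): if `p` is a closest point of `x`
on the geodesic segment `γ|_{[c,e]}` and `q ≥ p`, then
`d(x, γ q) ≥ d(x, γ p) + (q - p) - 4δ`. -/
lemma key_ge [MetricSpace X] (δ : ℝ) (hδ : 0 ≤ δ)
    (hgeo : GeodesicSpace X) (hhyp : DeltaHyp X δ)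
    (γ : ℝ → X) (c e : ℝ)
    (hseg : ∀ s ∈ Icc c e, ∀ t ∈ Icc c e, dist (γ s) (γ t) = |s - t|)
    (x : X) (p : ℝ) (hp : p ∈ Icc c e)
    (hmin : ∀ q ∈ Icc c e, dist x (γ p) ≤ dist x (γ q))
    (q : ℝ) (hq : q ∈ Icc c e) (hpq : p ≤ q) :
    dist x (γ p) + (q - p) - 4 * δ ≤ dist x (γ q) := by
  rcases le_or_gt (q - p) (2 * δ) with hsmall | hbig
  · have := hmin q hq
    linarith
  · -- main claim for each s in (p + 2δ, q]
    obtain ⟨α, hα, hα0, hαe⟩ := hgeo (γ q) x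
    obtain ⟨β, hβ, hβ0, hβe⟩ := hgeo (γ p) x
    have hIccpq : Icc p q ⊆ Icc c e := fun u hu => ⟨hp.1.trans hu.1, hu.2.trans hq.2⟩
    have hγpq : IsGeodSegment γ p q := fun s hs t ht => hseg s (hIccpq hs) t (hIccpq ht)
    have main : ∀ s, p + 2 * δ < s → s ≤ q →
        dist x (γ p) + (q - s) - 2 * δ ≤ dist x (γ q) := by
      intro s hs1 hs2
      have hsIcc : s ∈ Icc p q := ⟨by linarith, hs2⟩
      have hsce : s ∈ Icc c e := hIccpq hsIcc
      obtain ⟨w, hw, hwd⟩ := hhyp γ α β p q 0 (dist (γ q) x) 0 (dist (γ p) x)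
        hγpq hα hβ hpq dist_nonneg dist_nonneg hβ0.symm hα0.symm
        (hαe.trans hβe.symm) s hsIcc
      rcases hw with ⟨t, ht, rfl⟩ | ⟨t, ht, rfl⟩
      · -- w on the geodesic from γ q to x
        have hwq : dist (α t) (γ q) = t := by
          have := hα t ht 0 ⟨le_rfl, dist_nonneg⟩
          rw [hα0] at this
          rw [this, sub_zero, abs_of_nonneg ht.1]
        have hwx : dist (α t) x = dist (γ q) x - t := by
          have := hα t ht (dist (γ q) x) ⟨dist_nonneg, le_rfl⟩
          rw [hαe] at this
          rw [this, abs_of_nonpos (by linarith [ht.2]), neg_sub]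
        have h1 : dist x (γ p) ≤ dist x (γ s) := hmin s hsce
        have h2 : dist x (γ s) ≤ dist x (α t) + dist (α t) (γ s) :=
          dist_triangle _ _ _
        have h3 : dist (γ s) (γ q) ≤ dist (γ s) (α t) + dist (α t) (γ q) :=
          dist_triangle _ _ _
        have h4 : dist (γ s) (γ q) = q - s := by
          rw [hseg s hsce q hq, abs_of_nonpos (by linarith), neg_sub]
        have h5 : dist x (α t) = dist (α t) x := dist_comm _ _
        have h6 : dist (α t) (γ s) = dist (γ s) (α t) := dist_comm _ _
        have h7 : dist x (γ q) = dist (γ q) x := dist_comm _ _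
        linarith
      · -- w on the geodesic from γ p to x : contradiction
        exfalso
        have hwx : dist (β t) x = dist (γ p) x - t := by
          have := hβ t ht (dist (γ p) x) ⟨dist_nonneg, le_rfl⟩
          rw [hβe] at this
          rw [this, abs_of_nonpos (by linarith [ht.2]), neg_sub]
        have hwp : dist (β t) (γ p) = t := by
          have := hβ t ht 0 ⟨le_rfl, dist_nonneg⟩
          rw [hβ0] at this
          rw [this, sub_zero, abs_of_nonneg ht.1]
        have h1 : dist x (γ p) ≤ dist x (γ s) := hmin s hsce
        have h2 : dist x (γ s) ≤ dist x (β t) + dist (β t) (γ s) :=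
          dist_triangle _ _ _
        have h3 : dist (γ s) (γ p) ≤ dist (γ s) (β t) + dist (β t) (γ p) :=
          dist_triangle _ _ _
        have h4 : dist (γ s) (γ p) = s - p := by
          rw [hseg s hsce p hp, abs_of_nonneg (by linarith)]
        have h5 : dist x (β t) = dist (β t) x := dist_comm _ _
        have h6 : dist (β t) (γ s) = dist (γ s) (β t) := dist_comm _ _
        have h7 : dist x (γ p) = dist (γ p) x := dist_comm _ _
        linarith
    refine le_of_forall_pos_le_add (fun ε hε => ?_)
    have h1 : p + 2 * δ < min q (p + 2 * δ + ε) := lt_min (by linarith) (by linarith)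
    have h2 : min q (p + 2 * δ + ε) ≤ q := min_le_left _ _
    have h3 := main _ h1 h2
    have h4 : min q (p + 2 * δ + ε) ≤ p + 2 * δ + ε := min_le_right _ _
    linarith

/-- Two-sided version of `key_ge`. -/
lemma key_abs [MetricSpace X] (δ : ℝ) (hδ : 0 ≤ δ)
    (hgeo : GeodesicSpace X) (hhyp : DeltaHyp X δ)
    (γ : ℝ → X) (c e : ℝ)
    (hseg : ∀ s ∈ Icc c e, ∀ t ∈ Icc c e, dist (γ s) (γ t) = |s - t|)
    (x : X) (p : ℝ) (hp : p ∈ Icc c e)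
    (hmin : ∀ q ∈ Icc c e, dist x (γ p) ≤ dist x (γ q))
    (q : ℝ) (hq : q ∈ Icc c e) :
    dist x (γ p) + |q - p| - 4 * δ ≤ dist x (γ q) := by
  rcases le_total p q with hpq | hqp
  · rw [abs_of_nonneg (by linarith)]
    exact key_ge δ hδ hgeo hhyp γ c e hseg x p hp hmin q hq hpq
  · rw [abs_of_nonpos (by linarith), neg_sub]
    set γ' : ℝ → X := fun s => γ (c + e - s) with hγ'
    have hmem : ∀ s ∈ Icc c e, c + e - s ∈ Icc c e := fun s hs =>
      ⟨by linarith [hs.2], by linarith [hs.1]⟩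
    have hseg' : ∀ s ∈ Icc c e, ∀ t ∈ Icc c e, dist (γ' s) (γ' t) = |s - t| := by
      intro s hs t ht
      rw [hγ']
      rw [hseg _ (hmem s hs) _ (hmem t ht)]
      rw [show c + e - s - (c + e - t) = t - s by ring, abs_sub_comm]
    have hp' : c + e - p ∈ Icc c e := hmem p hp
    have hq' : c + e - q ∈ Icc c e := hmem q hq
    have hpp : γ' (c + e - p) = γ p := by rw [hγ']; norm_num
    have hqq : γ' (c + e - q) = γ q := by rw [hγ']; norm_num
    have hmin' : ∀ u ∈ Icc c e, dist x (γ' (c + e - p)) ≤ dist x (γ' u) := by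
      intro u hu
      rw [hpp]
      exact hmin _ (hmem u hu)
    have := key_ge δ hδ hgeo hhyp γ' c e hseg' x (c + e - p) hp' hmin'
      (c + e - q) hq' (by linarith)
    rw [hpp, hqq] at this
    linarith

/-- Core one-sided statement: the closest point on a deep subsegment is closest
on any extension to the right. -/
lemma core_right [MetricSpace X] (δ : ℝ) (hδ : 0 ≤ δ)
    (hgeo : GeodesicSpace X) (hhyp : DeltaHyp X δ)
    (γ : ℝ → X) (J : Set ℝ) (hJoc : J.OrdConnected)
    (hgeod : ∀ s ∈ J, ∀ t ∈ J, dist (γ s) (γ t) = |s - t|)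
    (a b : ℝ) (ha : a ∈ J) (hb : b ∈ J) (hab : a ≤ b)
    (x : X) (s₀ : ℝ) (hs₀ : s₀ ∈ Icc a b)
    (hclosest : ∀ t ∈ Icc a b, dist x (γ s₀) ≤ dist x (γ t))
    (hdeep : 4 * δ < b - s₀)
    (t : ℝ) (htJ : t ∈ J) (hbt : b < t) :
    dist x (γ s₀) ≤ dist x (γ t) := by
  have hsub : Icc a t ⊆ J := hJoc.out ha htJ
  have hseg : ∀ s ∈ Icc a t, ∀ u ∈ Icc a t, dist (γ s) (γ u) = |s - u| :=
    fun s hs u hu => hgeod s (hsub hs) u (hsub hu)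
  have hat : a ≤ t := hab.trans hbt.le
  have hcont : ContinuousOn (fun s => dist x (γ s)) (Icc a t) := by
    intro s hs
    rw [Metric.continuousWithinAt_iff]
    intro ε hε
    refine ⟨ε, hε, fun u hu hus => lt_of_le_of_lt ?_ hus⟩
    have h1 : dist (dist x (γ u)) (dist x (γ s)) ≤ dist (γ u) (γ s) := by
      rw [Real.dist_eq, dist_comm x (γ u), dist_comm x (γ s)]
      exact abs_dist_sub_le _ _ _
    rw [hseg u hu s hs] at h1
    rw [Real.dist_eq]
    exact h1
  obtain ⟨r, hr, hrm⟩ := isCompact_Icc.exists_isMinOn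
    (nonempty_Icc.mpr hat) hcont
  have hrmin : ∀ u ∈ Icc a t, dist x (γ r) ≤ dist x (γ u) :=
    fun u hu => hrm hu
  have hs₀at : s₀ ∈ Icc a t := ⟨hs₀.1, hs₀.2.trans hbt.le⟩
  rcases le_or_gt r b with hrb | hrb
  · -- r ≤ b : s₀ is also a closest point on [a, t]
    have heq : dist x (γ s₀) = dist x (γ r) :=
      le_antisymm (hclosest r ⟨hr.1, hrb⟩) (hrmin s₀ hs₀at)
    have hmin' : ∀ u ∈ Icc a t, dist x (γ s₀) ≤ dist x (γ u) :=
      fun u hu => heq ▸ hrmin u hu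
    have := key_ge δ hδ hgeo hhyp γ a t hseg x s₀ hs₀at hmin' t
      (right_mem_Icc.mpr hat) (by linarith [hs₀.2])
    linarith [hs₀.2]
  · -- b < r : contradiction with minimality of s₀ on [a, b]
    exfalso
    have h1 := key_abs δ hδ hgeo hhyp γ a t hseg x r hr hrmin s₀ hs₀at
    rw [abs_of_nonpos (by linarith [hs₀.2]), neg_sub] at h1
    have h2 : dist x (γ b) ≤ dist x (γ r) + dist (γ r) (γ b) := dist_triangle _ _ _
    have h3 : dist (γ r) (γ b) = r - b := by
      rw [hseg r hr b ⟨hab, hbt.le⟩, abs_of_nonneg (by linarith)]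
    have h4 := hclosest b (right_mem_Icc.mpr hab)
    linarith

end Lemma37Aux

/-- **Lemma 3.7.** In the standard setup, if `w' ∉ X_y(2D) ∪ X_z(2D)` and `u = γ s₀` is
a point on `[y,z]` closest to `w'`, then `u` is also a point on `[o,ξ]` closest to
`w'`. -/
theorem closest_on_segment_closest_on_ray
    (X : Type*) [MetricSpace X] [ProperSpace X] (δ : ℝ) (hδ : 0 ≤ δ)
    (hgeo : GeodesicSpace X) (hhyp : DeltaHyp X δ)
    (D₀ : ℝ) (hD₀nn : 0 ≤ D₀)
    (hD₀ : ∀ u₁ u₂ u₃ : ℕ → X, IsGromovSeq u₁ → IsGromovSeq u₂ → IsGromovSeq u₃ →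
      ∀ x x' : X,
        IsQuasiCentroid 1 0 (10 * δ) x (Sum.inr u₁) (Sum.inr u₂) (Sum.inr u₃) →
        IsQuasiCentroid 1 0 (10 * δ) x' (Sum.inr u₁) (Sum.inr u₂) (Sum.inr u₃) →
        dist x x' ≤ D₀)
    (D : ℝ) (hD : D = max D₀ (10000 * δ))
    (L : ℝ) (hL : 0 ≤ L) (w : ℕ → X) (hpole : PoleAt L (Sum.inr w))
    (v : ℕ → X) (hv : IsGromovSeq v) (γ : ℝ → X) (I : Set ℝ)
    (hγ : IsGeodJoining γ I (Sum.inr w) (Sum.inr v))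
    (a b : ℝ) (ha : a ∈ I) (hb : b ∈ I) (hab : a ≤ b) (hlen : 100 * D < b - a)
    (hproj : ∀ η : ℕ → X, IsGromovSeq η → ∀ p : X,
      IsQuasiCentroid 1 0 (3 * δ) p (Sum.inr η) (Sum.inl (γ a)) (Sum.inl (γ b)) →
      dist p (γ a) ≤ D ∨ dist p (γ b) ≤ D)
    (x : X) (hx1 : ¬ segProjIn γ a b x (γ a) (2 * D))
    (hx2 : ¬ segProjIn γ a b x (γ b) (2 * D))
    (s₀ : ℝ) (hs₀ : s₀ ∈ Icc a b)
    (hclosest : ∀ t ∈ Icc a b, dist x (γ s₀) ≤ dist x (γ t)) :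
    ∀ t ∈ I, dist x (γ s₀) ≤ dist x (γ t) := by
  obtain ⟨hne, hIoc, hgeod, -, -⟩ := hγ
  have hIccI : Icc a b ⊆ I := hIoc.out ha hb
  have hseg_ab : ∀ s ∈ Icc a b, ∀ t ∈ Icc a b, dist (γ s) (γ t) = |s - t| :=
    fun s hs t ht => hgeod s (hIccI hs) t (hIccI ht)
  have hDδ : 10000 * δ ≤ D := hD ▸ le_max_right _ _
  -- extract deep closest points from hx1, hx2
  rw [segProjIn] at hx1 hx2
  push_neg at hx1 hx2
  obtain ⟨s₁, hs₁, hs₁c, hs₁d⟩ := hx1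
  obtain ⟨s₂, hs₂, hs₂c, hs₂d⟩ := hx2
  -- any two closest points on [a,b] are within 4δ of each other
  have hclose : ∀ s ∈ Icc a b, (∀ u ∈ Icc a b, dist x (γ s) ≤ dist x (γ u)) →
      |s - s₀| ≤ 4 * δ := by
    intro s hs hsc
    have heq : dist x (γ s₀) = dist x (γ s) :=
      le_antisymm (hclosest s hs) (hsc s₀ hs₀)
    have := key_abs δ hδ hgeo hhyp γ a b hseg_ab x s₀ hs₀ hclosest s hs
    linarith
  have hd1 : dist (γ s₁) (γ a) = s₁ - a := by
    rw [hgeod s₁ (hIccI hs₁) a ha, abs_of_nonneg (by linarith [hs₁.1])]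
  have hd2 : dist (γ s₂) (γ b) = b - s₂ := by
    rw [hgeod s₂ (hIccI hs₂) b hb, abs_of_nonpos (by linarith [hs₂.2]), neg_sub]
  have h1 := hclose s₁ hs₁ hs₁c
  have h2 := hclose s₂ hs₂ hs₂c
  have habs1 : s₁ - s₀ ≤ 4 * δ := (abs_le.mp h1).2
  have habs2 : s₀ - s₂ ≤ 4 * δ := by have := (abs_le.mp h2).1; linarith
  have hdeepa : 4 * δ < s₀ - a := by
    rw [hd1] at hs₁d; linarith
  have hdeepb : 4 * δ < b - s₀ := by
    rw [hd2] at hs₂d; linarith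
  intro t ht
  rcases lt_or_ge t a with hta | hta
  · -- t < a: apply the core lemma to the reversed parametrization
    set γ' : ℝ → X := fun s => γ (-s) with hγ'
    set J' : Set ℝ := (fun s : ℝ => -s) ⁻¹' I with hJ'
    have hJ'oc : J'.OrdConnected := by
      refine ⟨fun u hu v hv w hw => ?_⟩
      exact Set.mem_preimage.mpr
        (hIoc.out (Set.mem_preimage.mp hv) (Set.mem_preimage.mp hu)
          ⟨neg_le_neg hw.2, neg_le_neg hw.1⟩)
    have hgeod' : ∀ s ∈ J', ∀ u ∈ J', dist (γ' s) (γ' u) = |s - u| := by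
      intro s hs u hu
      rw [hγ', hgeod (-s) hs (-u) hu, show -s - -u = -(s - u) by ring, abs_neg]
    have hmemJ' : ∀ s ∈ I, -s ∈ J' := fun s hs => by
      simp only [hJ', Set.mem_preimage, neg_neg]; exact hs
    have hs₀' : -s₀ ∈ Icc (-b) (-a) := ⟨neg_le_neg hs₀.2, neg_le_neg hs₀.1⟩
    have hγ's₀ : γ' (-s₀) = γ s₀ := by rw [hγ']; norm_num
    have hclosest' : ∀ u ∈ Icc (-b) (-a), dist x (γ' (-s₀)) ≤ dist x (γ' u) := by
      intro u hu
      rw [hγ's₀]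
      exact hclosest (-u) ⟨by linarith [hu.2], by linarith [hu.1]⟩
    have := core_right δ hδ hgeo hhyp γ' J' hJ'oc hgeod' (-b) (-a)
      (hmemJ' b hb) (hmemJ' a ha) (by linarith) x (-s₀) hs₀' hclosest'
      (by linarith) (-t) (hmemJ' t ht) (by linarith)
    rw [hγ's₀] at this
    have hγ't : γ' (-t) = γ t := by rw [hγ']; norm_num
    rwa [hγ't] at this
  · rcases le_or_gt t b with htb | htb
    · exact hclosest t ⟨hta, htb⟩
    · exact core_right δ hδ hgeo hhyp γ I hIoc hgeod a b ha hb hab x s₀ hs₀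
        hclosest hdeepb t ht htb

end BoundaryRigidity
end

section
/- In the setup below, let x ∈ X with x ∉ X_y(10D) ∪ X_z(10D). Then: (1) for every x' ∈ X_y(3D) and every geodesic [x,x'], d(y, [x,x']) ≤ 5D; and (2) for every x'' ∈ X_z(3D) and every geodesic [x,x''], d(z, [x,x'']) ≤ 5D. -/
open Metric Filter Set

namespace BoundaryRigidity

universe u

variable {X : Type*} {Y : Type*}

/-- A continuous function of the form `t ↦ dist x (σ t)` attains a minimum on a
compact segment when `σ` is a geodesic parametrization. -/
lemma exists_closest {X : Type*} [MetricSpace X] (σ : ℝ → X) (a b : ℝ) (hab : a ≤ b)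
    (hσ : IsGeodSegment σ a b) (x : X) :
    ∃ s ∈ Icc a b, ∀ t ∈ Icc a b, dist x (σ s) ≤ dist x (σ t) := by
  have hlip : LipschitzOnWith 1 (fun t => dist x (σ t)) (Icc a b) := by
    apply LipschitzOnWith.of_dist_le_mul
    intro s hs t ht
    calc dist (dist x (σ s)) (dist x (σ t))
        = |dist (σ s) x - dist (σ t) x| := by
          rw [Real.dist_eq, dist_comm x (σ s), dist_comm x (σ t)]
      _ ≤ dist (σ s) (σ t) := abs_dist_sub_le _ _ _
      _ = 1 * dist s t := by rw [hσ s hs t ht, Real.dist_eq, one_mul]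
  obtain ⟨s, hs, hmin⟩ :=
    isCompact_Icc.exists_isMinOn (nonempty_Icc.2 hab) hlip.continuousOn
  exact ⟨s, hs, fun t ht => hmin ht⟩

/-- Core geometric lemma: if `x` projects on the geodesic segment `σ|_{[a,b]}` at
parameter distance `> 10D` from `a`, and `x'` projects within `3D` of `a`, then any
geodesic from `x` to `x'` passes within `5D` of `σ a`. -/
lemma geod_passes_near {X : Type*} [MetricSpace X] {δ D : ℝ} (hδ : 0 ≤ δ)
    (hδD : 10000 * δ ≤ D) (hgeo : GeodesicSpace X) (hhyp : DeltaHyp X δ)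
    (σ : ℝ → X) (a b : ℝ) (hσ : IsGeodSegment σ a b)
    (x x' : X) (s₀ : ℝ) (hs₀ : s₀ ∈ Icc a b)
    (hs₀min : ∀ t ∈ Icc a b, dist x (σ s₀) ≤ dist x (σ t)) (hs₀far : 10 * D < s₀ - a)
    (s₁ : ℝ) (hs₁ : s₁ ∈ Icc a b)
    (hs₁min : ∀ t ∈ Icc a b, dist x' (σ s₁) ≤ dist x' (σ t)) (hs₁near : s₁ - a ≤ 3 * D)
    (γ' : ℝ → X) (c d : ℝ) (hcd : c ≤ d) (hγ' : IsGeodSegment γ' c d)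
    (hc : γ' c = x) (hd : γ' d = x') :
    ∃ s ∈ Icc c d, dist (σ a) (γ' s) ≤ 5 * D := by
  have hD0 : 0 ≤ D := le_trans (by linarith) hδD
  have hab' : a ≤ b := le_trans hs₀.1 hs₀.2
  obtain ⟨sm, hsmmem, hsmmin⟩ := exists_closest γ' c d hcd hγ' (σ a)
  refine ⟨sm, hsmmem, ?_⟩
  apply le_of_forall_pos_le_add
  intro ε hε
  set ε' := min (ε / 2) ((s₀ - a - 10 * D) / 2) with hε'def
  have hε'pos : 0 < ε' := lt_min (by linarith) (by linarith)
  have he1 : ε' ≤ ε / 2 := min_le_left _ _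
  have he2 : ε' ≤ (s₀ - a - 10 * D) / 2 := min_le_right _ _
  set μ := 3 * D + 4 * δ + ε' with hμdef
  have hs₀b : s₀ ≤ b := hs₀.2
  have h2 : a + μ + 2 * δ < s₀ := by
    have h6 : 6 * δ ≤ D := by linarith
    linarith
  have h4δ : 4 * δ ≤ D := by linarith
  have h3 : a + μ ≤ b := by linarith
  have hμ0 : 0 ≤ μ := by linarith
  have ham : a + μ ∈ Icc a b := ⟨by linarith, h3⟩
  have h1 : s₁ ≤ a + μ := by linarith [hs₁near]
  -- distances along σ
  have hdma : dist (σ a) (σ (a + μ)) = μ := by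
    rw [hσ a ⟨le_refl a, hab'⟩ (a + μ) ham, abs_of_nonpos (by linarith)]; ring
  have hdms₀ : dist (σ (a + μ)) (σ s₀) = s₀ - (a + μ) := by
    rw [hσ _ ham _ hs₀, abs_of_nonpos (by linarith)]; ring
  have hdms₁ : dist (σ (a + μ)) (σ s₁) = (a + μ) - s₁ := by
    rw [hσ _ ham _ hs₁, abs_of_nonneg (by linarith)]
  -- geodesics from the projection points to x and x'
  obtain ⟨g₁, hg₁, hg₁0, hg₁e⟩ := hgeo (σ s₀) x
  obtain ⟨g₂, hg₂, hg₂0, hg₂e⟩ := hgeo (σ s₁) x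
  obtain ⟨g₃, hg₃, hg₃0, hg₃e⟩ := hgeo (σ s₁) x'
  have hσr : IsGeodSegment σ s₁ s₀ := fun s hs t ht =>
    hσ s ⟨le_trans hs₁.1 hs.1, le_trans hs.2 hs₀b⟩ t ⟨le_trans hs₁.1 ht.1, le_trans ht.2 hs₀b⟩
  have hs₁s₀ : s₁ ≤ s₀ := by linarith
  -- first triangle: σ s₁, σ s₀, x
  obtain ⟨p, hp, hpd⟩ := hhyp σ g₁ g₂ s₁ s₀ 0 (dist (σ s₀) x) 0 (dist (σ s₁) x)
    hσr hg₁ hg₂ hs₁s₀ dist_nonneg dist_nonneg hg₂0.symm hg₁0.symm (hg₁e.trans hg₂e.symm)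
    (a + μ) ⟨h1, by linarith⟩
  rcases hp with ⟨t, ht, rfl⟩ | ⟨t, ht, rfl⟩
  · -- Case A: `m` is δ-close to the geodesic `[σ s₀, x]`: contradiction.
    exfalso
    have hA1 : dist x (g₁ t) = dist (σ s₀) x - t := by
      have h := hg₁ t ht (dist (σ s₀) x) ⟨dist_nonneg, le_refl _⟩
      rw [hg₁e] at h
      rw [dist_comm, h, abs_of_nonpos (by linarith [ht.2])]; ring
    have hA2 : dist (g₁ t) (σ s₀) = t := by
      have h := hg₁ t ht 0 ⟨le_refl 0, dist_nonneg⟩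
      rw [hg₁0] at h
      rw [h, sub_zero, abs_of_nonneg ht.1]
    have hmin1 : dist x (σ s₀) ≤ dist x (σ (a + μ)) := hs₀min _ ham
    have htri : dist x (σ (a + μ)) ≤ dist x (g₁ t) + dist (g₁ t) (σ (a + μ)) :=
      dist_triangle _ _ _
    have hpd' : dist (g₁ t) (σ (a + μ)) ≤ δ := by rw [dist_comm]; exact hpd
    have hcomm : dist x (σ s₀) = dist (σ s₀) x := dist_comm _ _
    have htle : t ≤ δ := by linarith
    have htri2 : dist (σ (a + μ)) (σ s₀) ≤ dist (σ (a + μ)) (g₁ t) + dist (g₁ t) (σ s₀) :=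
      dist_triangle _ _ _
    linarith
  · -- Case B: `m` is δ-close to `g₂ t` on the geodesic `[σ s₁, x]`.
    -- second triangle: σ s₁, x, x'
    obtain ⟨q, hq, hqd⟩ := hhyp g₂ γ' g₃ 0 (dist (σ s₁) x) c d 0 (dist (σ s₁) x')
      hg₂ hγ' hg₃ dist_nonneg hcd dist_nonneg (hg₂0.trans hg₃0.symm)
      (hg₂e.trans hc.symm) (hd.trans hg₃e.symm) t ht
    rcases hq with ⟨u, hu, rfl⟩ | ⟨u, hu, rfl⟩
    · -- Case B1: `m` is 2δ-close to the geodesic `[x, x']`: done.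
      have t1 := dist_triangle (σ a) (σ (a + μ)) (γ' u)
      have t2 := dist_triangle (σ (a + μ)) (g₂ t) (γ' u)
      have hkey : dist (σ a) (γ' sm) ≤ dist (σ a) (γ' u) := hsmmin u hu
      have h6 : 6 * δ ≤ 2 * D := by linarith
      linarith
    · -- Case B2: `m` is 2δ-close to the geodesic `[σ s₁, x']`: contradiction.
      exfalso
      have hB1 : dist x' (g₃ u) = dist (σ s₁) x' - u := by
        have h := hg₃ u hu (dist (σ s₁) x') ⟨dist_nonneg, le_refl _⟩
        rw [hg₃e] at h
        rw [dist_comm, h, abs_of_nonpos (by linarith [hu.2])]; ring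
      have hB2 : dist (g₃ u) (σ s₁) = u := by
        have h := hg₃ u hu 0 ⟨le_refl 0, dist_nonneg⟩
        rw [hg₃0] at h
        rw [h, sub_zero, abs_of_nonneg hu.1]
      have hmin1 : dist x' (σ s₁) ≤ dist x' (σ (a + μ)) := hs₁min _ ham
      have hcomm : dist x' (σ s₁) = dist (σ s₁) x' := dist_comm _ _
      have t2 := dist_triangle x' (g₃ u) (σ (a + μ))
      have t3 := dist_triangle (g₃ u) (g₂ t) (σ (a + μ))
      have hc1 : dist (g₃ u) (g₂ t) = dist (g₂ t) (g₃ u) := dist_comm _ _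
      have hc2 : dist (g₂ t) (σ (a + μ)) = dist (σ (a + μ)) (g₂ t) := dist_comm _ _
      have hule : u ≤ 2 * δ := by linarith
      have t4 := dist_triangle (σ (a + μ)) (g₂ t) (g₃ u)
      have t5 := dist_triangle (σ (a + μ)) (g₃ u) (σ s₁)
      linarith

/-- **Lemma 3.9.** In the standard setup, if `x ∉ X_y(10D) ∪ X_z(10D)`, then every
geodesic from `x` to a point of `X_y(3D)` passes within `5D` of `y`, and every
geodesic from `x` to a point of `X_z(3D)` passes within `5D` of `z`. -/
theorem geodesics_pass_near_endpoints
    (X : Type*) [MetricSpace X] [ProperSpace X] (δ : ℝ) (hδ : 0 ≤ δ)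
    (hgeo : GeodesicSpace X) (hhyp : DeltaHyp X δ)
    (D₀ : ℝ) (hD₀nn : 0 ≤ D₀)
    (hD₀ : ∀ u₁ u₂ u₃ : ℕ → X, IsGromovSeq u₁ → IsGromovSeq u₂ → IsGromovSeq u₃ →
      ∀ x x' : X,
        IsQuasiCentroid 1 0 (10 * δ) x (Sum.inr u₁) (Sum.inr u₂) (Sum.inr u₃) →
        IsQuasiCentroid 1 0 (10 * δ) x' (Sum.inr u₁) (Sum.inr u₂) (Sum.inr u₃) →
        dist x x' ≤ D₀)
    (D : ℝ) (hD : D = max D₀ (10000 * δ))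
    (L : ℝ) (hL : 0 ≤ L) (w : ℕ → X) (hpole : PoleAt L (Sum.inr w))
    (v : ℕ → X) (hv : IsGromovSeq v) (γ : ℝ → X) (I : Set ℝ)
    (hγ : IsGeodJoining γ I (Sum.inr w) (Sum.inr v))
    (a b : ℝ) (ha : a ∈ I) (hb : b ∈ I) (hab : a ≤ b) (hlen : 100 * D < b - a)
    (hproj : ∀ η : ℕ → X, IsGromovSeq η → ∀ p : X,
      IsQuasiCentroid 1 0 (3 * δ) p (Sum.inr η) (Sum.inl (γ a)) (Sum.inl (γ b)) →
      dist p (γ a) ≤ D ∨ dist p (γ b) ≤ D)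
    (x : X) (hx1 : ¬ segProjIn γ a b x (γ a) (10 * D))
    (hx2 : ¬ segProjIn γ a b x (γ b) (10 * D)) :
    (∀ x' : X, segProjIn γ a b x' (γ a) (3 * D) →
      ∀ (γ' : ℝ → X) (I' : Set ℝ), IsGeodJoining γ' I' (Sum.inl x) (Sum.inl x') →
        ∃ s ∈ I', dist (γ a) (γ' s) ≤ 5 * D) ∧
    (∀ x'' : X, segProjIn γ a b x'' (γ b) (3 * D) →
      ∀ (γ' : ℝ → X) (I' : Set ℝ), IsGeodJoining γ' I' (Sum.inl x) (Sum.inl x'') →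
        ∃ s ∈ I', dist (γ b) (γ' s) ≤ 5 * D) := by
  have hII : Icc a b ⊆ I := hγ.2.1.out ha hb
  have hσ : IsGeodSegment γ a b := fun s hs t ht => hγ.2.2.1 s (hII hs) t (hII ht)
  have hδD : 10000 * δ ≤ D := hD ▸ le_max_right _ _
  simp only [segProjIn] at hx1 hx2
  push_neg at hx1 hx2
  obtain ⟨s₀, hs₀mem, hs₀min, hs₀far⟩ := hx1
  obtain ⟨s₂, hs₂mem, hs₂min, hs₂far⟩ := hx2
  have hs₀far' : 10 * D < s₀ - a := by
    rwa [hσ s₀ hs₀mem a ⟨le_refl a, hab⟩, abs_of_nonneg (by linarith [hs₀mem.1])] at hs₀far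
  have hs₂far' : 10 * D < b - s₂ := by
    rw [hσ s₂ hs₂mem b ⟨hab, le_refl b⟩, abs_of_nonpos (by linarith [hs₂mem.2])] at hs₂far
    linarith
  constructor
  · -- part (1)
    intro x' hx' γ' I' hjoin
    obtain ⟨s₁, hs₁mem, hs₁min⟩ := exists_closest γ a b hab hσ x'
    have hnear : dist (γ s₁) (γ a) ≤ 3 * D := hx' s₁ hs₁mem hs₁min
    have hnear' : s₁ - a ≤ 3 * D := by
      rwa [hσ s₁ hs₁mem a ⟨le_refl a, hab⟩,
        abs_of_nonneg (by linarith [hs₁mem.1])] at hnear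
    have hle := hjoin.2.2.2.1
    have hre := hjoin.2.2.2.2
    simp only [LeftEnd] at hle
    simp only [RightEnd] at hre
    obtain ⟨c, hcI, hcx, hcmin⟩ := hle
    obtain ⟨d, hdI, hdx, hdmax⟩ := hre
    have hsub : Icc c d ⊆ I' := hjoin.2.1.out hcI hdI
    have hγ'seg : IsGeodSegment γ' c d := fun s hs t ht =>
      hjoin.2.2.1 s (hsub hs) t (hsub ht)
    have hcd : c ≤ d := hcmin d hdI
    obtain ⟨s, hs, hle5⟩ := geod_passes_near hδ hδD hgeo hhyp γ a b hσ x x'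
      s₀ hs₀mem hs₀min hs₀far' s₁ hs₁mem hs₁min hnear' γ' c d hcd hγ'seg hcx hdx
    exact ⟨s, hsub hs, hle5⟩
  · -- part (2): reverse the segment
    intro x'' hx'' γ' I' hjoin
    set σ' : ℝ → X := fun t => γ (a + b - t) with hσ'def
    have hmap : ∀ t ∈ Icc a b, a + b - t ∈ Icc a b := fun t ht =>
      ⟨by linarith [ht.2], by linarith [ht.1]⟩
    have hσ' : IsGeodSegment σ' a b := by
      intro s hs t ht
      show dist (γ (a + b - s)) (γ (a + b - t)) = |s - t|
      rw [hσ _ (hmap s hs) _ (hmap t ht),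
        show a + b - s - (a + b - t) = t - s by ring, abs_sub_comm]
    have hkey : σ' (a + b - s₂) = γ s₂ := by
      show γ (a + b - (a + b - s₂)) = γ s₂
      congr 1; ring
    have hσ'a : σ' a = γ b := by
      show γ (a + b - a) = γ b
      congr 1; ring
    have hs₂mem' : a + b - s₂ ∈ Icc a b := hmap s₂ hs₂mem
    have hs₂min' : ∀ t ∈ Icc a b, dist x (σ' (a + b - s₂)) ≤ dist x (σ' t) := by
      intro t ht
      rw [hkey]
      exact hs₂min _ (hmap t ht)
    have hs₂far'' : 10 * D < (a + b - s₂) - a := by linarith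
    obtain ⟨s₃, hs₃mem, hs₃min⟩ := exists_closest σ' a b hab hσ' x''
    have hs₃γmin : ∀ t ∈ Icc a b, dist x'' (γ (a + b - s₃)) ≤ dist x'' (γ t) := by
      intro t ht
      have h := hs₃min (a + b - t) (hmap t ht)
      have heq : σ' (a + b - t) = γ t := by
        show γ (a + b - (a + b - t)) = γ t
        congr 1; ring
      rwa [heq] at h
    have hnear := hx'' (a + b - s₃) (hmap s₃ hs₃mem) hs₃γmin
    have hnear' : s₃ - a ≤ 3 * D := by
      rw [hσ _ (hmap s₃ hs₃mem) b ⟨hab, le_refl b⟩,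
        show a + b - s₃ - b = a - s₃ by ring,
        abs_of_nonpos (by linarith [hs₃mem.1])] at hnear
      linarith
    have hle := hjoin.2.2.2.1
    have hre := hjoin.2.2.2.2
    simp only [LeftEnd] at hle
    simp only [RightEnd] at hre
    obtain ⟨c, hcI, hcx, hcmin⟩ := hle
    obtain ⟨d, hdI, hdx, hdmax⟩ := hre
    have hsub : Icc c d ⊆ I' := hjoin.2.1.out hcI hdI
    have hγ'seg : IsGeodSegment γ' c d := fun s hs t ht =>
      hjoin.2.2.1 s (hsub hs) t (hsub ht)
    have hcd : c ≤ d := hcmin d hdI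
    obtain ⟨s, hs, hle5⟩ := geod_passes_near hδ hδD hgeo hhyp σ' a b hσ' x x''
      (a + b - s₂) hs₂mem' hs₂min' hs₂far'' s₃ hs₃mem hs₃min hnear' γ' c d hcd hγ'seg hcx hdx
    rw [hσ'a] at hle5
    exact ⟨s, hsub hs, hle5⟩

end BoundaryRigidity
end
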